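/- arXiv:2210.00208 — 8 statements merged into one kernel-verified Lean document; each statement's English description precedes it below -/
import Mathlib

section
/- Let a, b be elements of a (noncommutative) ring satisfying a² = (k−2)a + (k−1)·1 and b² = (k−2)b + (k−1)·1 for an integer k ≥ 2. If [(1+a)(1+b)]ⁿ = m_n·1 + Σ_{j=1}^n c_{n,j}(ab)^j + Σ_{j=1}^{n−1} d_{n,j}(ba)^j + Σ_{j=0}^{n−1} e_{n,j}(ab)^j a + Σ_{j=0}^{n−1} f_{n,j}(ba)^j b, then multiplying by a on the left and using a(a+1) = (k−1)(a+1) yields the coefficient relations m_n = e_{n,0}, c_{n,j} = f_{n,j−1} for 1 ≤ j ≤ n, and e_{n,j} = d_{n,j} for 1 ≤ j ≤ n−1. -/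
open Finset

/-- The reduced expansion `m·1 + Σ c_j (ab)^j + Σ d_j (ba)^j + Σ e_j (ab)^j a + Σ f_j (ba)^j b`. -/
def expansion {R : Type*} [Ring R] (a b : R) (n : ℕ) (m : ℤ) (c d e f : ℕ → ℤ) : R :=
  m • (1 : R) + ∑ j ∈ Finset.Icc 1 n, c j • (a * b) ^ j
    + ∑ j ∈ Finset.Icc 1 (n - 1), d j • (b * a) ^ j
    + ∑ j ∈ Finset.range n, e j • ((a * b) ^ j * a)
    + ∑ j ∈ Finset.range n, f j • ((b * a) ^ j * b)

section Aux

variable {R : Type*} [Ring R] (k : ℕ) (a b : R)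

lemma aux_Icc_sum (n : ℕ) (g : ℕ → R) :
    ∑ j ∈ Icc 1 n, g j = ∑ j ∈ range n, g (j + 1) := by
  rw [← Finset.Ico_add_one_right_eq_Icc, Finset.sum_Ico_eq_sum_range]
  simp [add_comm]

lemma aux_semiconj (j : ℕ) : a * (b * a) ^ j = (a * b) ^ j * a :=
  SemiconjBy.pow_right (by simp [SemiconjBy, mul_assoc]) j

lemma aux_pow_succ (j : ℕ) : (a * b) ^ (j + 1) = a * ((b * a) ^ j * b) := by
  rw [pow_succ, ← mul_assoc, ← aux_semiconj a b j, mul_assoc]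

variable (ha : a ^ 2 = ((k : R) - 2) * a + ((k : R) - 1) * 1)
include ha

lemma aux_sq : a * a = ((k : ℤ) - 2) • a + ((k : ℤ) - 1) • (1 : R) := by
  rw [zsmul_eq_mul, zsmul_eq_mul, ← sq, ha]
  push_cast
  ring_nf

lemma aux_A (j : ℕ) : a * (a * b) ^ (j + 1)
    = ((k : ℤ) - 2) • (a * b) ^ (j + 1) + ((k : ℤ) - 1) • ((b * a) ^ j * b) := by
  rw [aux_pow_succ, ← mul_assoc, aux_sq k a ha, add_mul, smul_mul_assoc, smul_mul_assoc,
    one_mul, ← aux_pow_succ]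

lemma aux_D (j : ℕ) : a * ((a * b) ^ (j + 1) * a)
    = ((k : ℤ) - 2) • ((a * b) ^ (j + 1) * a) + ((k : ℤ) - 1) • (b * a) ^ (j + 1) := by
  rw [← mul_assoc, aux_A k a b ha, add_mul, smul_mul_assoc, smul_mul_assoc, mul_assoc,
    ← pow_succ]

end Aux

theorem stmt0 {R : Type*} [Ring R] (k : ℕ) (hk : 2 ≤ k) (a b : R)
    (ha : a ^ 2 = ((k : R) - 2) * a + ((k : R) - 1) * 1)
    (hb : b ^ 2 = ((k : R) - 2) * b + ((k : R) - 1) * 1)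
    (n : ℕ) (hn : 1 ≤ n) (m : ℤ) (c d e f : ℕ → ℤ)
    (hexp : ((1 + a) * (1 + b)) ^ n = expansion a b n m c d e f)
    (huniq : ∀ (m₁ m₂ : ℤ) (c₁ c₂ d₁ d₂ e₁ e₂ f₁ f₂ : ℕ → ℤ),
      expansion a b n m₁ c₁ d₁ e₁ f₁ = expansion a b n m₂ c₂ d₂ e₂ f₂ →
      m₁ = m₂ ∧ (∀ j ∈ Finset.Icc 1 n, c₁ j = c₂ j) ∧
        (∀ j ∈ Finset.Icc 1 (n - 1), d₁ j = d₂ j) ∧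
        (∀ j ∈ Finset.range n, e₁ j = e₂ j) ∧ (∀ j ∈ Finset.range n, f₁ j = f₂ j)) :
    m = e 0 ∧ (∀ j, 1 ≤ j → j ≤ n → c j = f (j - 1)) ∧
      (∀ j, 1 ≤ j → j ≤ n - 1 → e j = d j) := by
  obtain ⟨N, rfl⟩ : ∃ N, n = N + 1 := ⟨n - 1, (Nat.succ_pred_eq_of_pos hn).symm⟩
  -- Step A: (1+a) * LHS = k • LHS
  have hsq : (1 + a) * (1 + a) = (k : ℤ) • (1 + a) := by
    have h2 := aux_sq k a ha
    rw [mul_add, add_mul, add_mul, mul_one, one_mul, h2, zsmul_eq_mul, zsmul_eq_mul,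
      zsmul_eq_mul, mul_add, mul_one]
    push_cast
    noncomm_ring
  have hstepA : (1 + a) * ((1 + a) * (1 + b)) ^ (N + 1)
      = (k : ℤ) • ((1 + a) * (1 + b)) ^ (N + 1) := by
    have h : ((1 + a) * (1 + b)) ^ (N + 1) = (1 + a) * ((1 + b) * ((1 + a) * (1 + b)) ^ N) := by
      rw [pow_succ']
      noncomm_ring
    rw [h, ← mul_assoc, hsq, smul_mul_assoc]
  -- Step B: k • expansion = expansion with k-multiplied coefficients
  have hstepB : (k : ℤ) • expansion a b (N + 1) m c d e f
      = expansion a b (N + 1) ((k : ℤ) * m) (fun j => k * c j) (fun j => k * d j)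
          (fun j => k * e j) (fun j => k * f j) := by
    simp only [expansion, smul_add, Finset.smul_sum, smul_smul]
  -- Step C: (1+a) * expansion = primed expansion
  have hstepC : (1 + a) * expansion a b (N + 1) m c d e f
      = expansion a b (N + 1) (m + ((k : ℤ) - 1) * e 0)
          (fun j => ((k : ℤ) - 1) * c j + f (j - 1))
          (fun j => d j + ((k : ℤ) - 1) * e j)
          (fun j => if j = 0 then m + ((k : ℤ) - 1) * e 0 else ((k : ℤ) - 1) * e j + d j)
          (fun j => f j + ((k : ℤ) - 1) * c (j + 1)) := by
    have hrw : ∀ (m₀ : ℤ) (c₀ d₀ e₀ f₀ : ℕ → ℤ), expansion a b (N + 1) m₀ c₀ d₀ e₀ f₀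
        = m₀ • (1 : R) + ∑ j ∈ range (N + 1), c₀ (j + 1) • (a * b) ^ (j + 1)
          + ∑ j ∈ range N, d₀ (j + 1) • (b * a) ^ (j + 1)
          + (∑ j ∈ range N, e₀ (j + 1) • ((a * b) ^ (j + 1) * a) + e₀ 0 • a)
          + ∑ j ∈ range (N + 1), f₀ j • ((b * a) ^ j * b) := by
      intro m₀ c₀ d₀ e₀ f₀
      rw [expansion, Nat.add_sub_cancel, aux_Icc_sum, aux_Icc_sum,
        Finset.sum_range_succ' (fun j => e₀ j • ((a * b) ^ j * a)) N, pow_zero, one_mul]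
    rw [hrw, hrw]
    simp only [add_mul, one_mul, mul_add, Finset.mul_sum, Nat.add_sub_cancel,
      Nat.succ_ne_zero, if_false, if_true, reduceIte]
    -- rewrite each (1+a) * term pointwise
    have h1 : ∀ j ∈ range (N + 1),
        c (j + 1) • (a * b) ^ (j + 1) + a * c (j + 1) • (a * b) ^ (j + 1)
        = c (j + 1) • (a * b) ^ (j + 1)
          + ((c (j + 1) * ((k : ℤ) - 2)) • (a * b) ^ (j + 1)
            + (c (j + 1) * ((k : ℤ) - 1)) • ((b * a) ^ j * b)) := by
      intro j _
      rw [mul_smul_comm, aux_A k a b ha, smul_add, smul_smul, smul_smul]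
    have h2 : ∀ j ∈ range N,
        d (j + 1) • (b * a) ^ (j + 1) + a * d (j + 1) • (b * a) ^ (j + 1)
        = d (j + 1) • (b * a) ^ (j + 1) + d (j + 1) • ((a * b) ^ (j + 1) * a) := by
      intro j _
      rw [mul_smul_comm, aux_semiconj]
    have h3 : ∀ j ∈ range N,
        e (j + 1) • ((a * b) ^ (j + 1) * a) + a * e (j + 1) • ((a * b) ^ (j + 1) * a)
        = e (j + 1) • ((a * b) ^ (j + 1) * a)
          + ((e (j + 1) * ((k : ℤ) - 2)) • ((a * b) ^ (j + 1) * a)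
            + (e (j + 1) * ((k : ℤ) - 1)) • (b * a) ^ (j + 1)) := by
      intro j _
      rw [mul_smul_comm, aux_D k a b ha, smul_add, smul_smul, smul_smul]
    have h4 : ∀ j ∈ range (N + 1),
        f j • ((b * a) ^ j * b) + a * f j • ((b * a) ^ j * b)
        = f j • ((b * a) ^ j * b) + f j • (a * b) ^ (j + 1) := by
      intro j _
      rw [mul_smul_comm, ← aux_pow_succ]
    rw [Finset.sum_congr rfl h1, Finset.sum_congr rfl h2, Finset.sum_congr rfl h3,
      Finset.sum_congr rfl h4]
    simp only [Finset.sum_add_distrib]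
    have ha0 : a * e 0 • a = (e 0 * ((k : ℤ) - 2)) • a + (e 0 * ((k : ℤ) - 1)) • (1 : R) := by
      rw [mul_smul_comm, aux_sq k a ha, smul_add, smul_smul, smul_smul]
    have ham : a * m • (1 : R) = m • a := by
      rw [mul_smul_comm, mul_one]
    rw [ha0, ham]
    -- now expand the RHS (primed) into matching atoms
    have hm'1 : (m + ((k : ℤ) - 1) * e 0) • (1 : R)
        = m • (1 : R) + (e 0 * ((k : ℤ) - 1)) • (1 : R) := by
      rw [← add_smul]; ring_nf
    have he'0 : (m + ((k : ℤ) - 1) * e 0) • a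
        = m • a + (e 0 • a + (e 0 * ((k : ℤ) - 2)) • a) := by
      rw [← add_smul, ← add_smul]
      congr 1
      ring
    have hcsum : ∑ j ∈ range (N + 1), (((k : ℤ) - 1) * c (j + 1) + f j) • (a * b) ^ (j + 1)
        = ∑ j ∈ range (N + 1), c (j + 1) • (a * b) ^ (j + 1)
          + (∑ j ∈ range (N + 1), (c (j + 1) * ((k : ℤ) - 2)) • (a * b) ^ (j + 1)
            + ∑ j ∈ range (N + 1), f j • (a * b) ^ (j + 1)) := by
      rw [← Finset.sum_add_distrib, ← Finset.sum_add_distrib]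
      refine Finset.sum_congr rfl fun j _ => ?_
      rw [← add_smul, ← add_smul]
      congr 1
      ring
    have hdsum : ∑ j ∈ range N, (d (j + 1) + ((k : ℤ) - 1) * e (j + 1)) • (b * a) ^ (j + 1)
        = ∑ j ∈ range N, d (j + 1) • (b * a) ^ (j + 1)
          + ∑ j ∈ range N, (e (j + 1) * ((k : ℤ) - 1)) • (b * a) ^ (j + 1) := by
      rw [← Finset.sum_add_distrib]
      refine Finset.sum_congr rfl fun j _ => ?_
      rw [← add_smul]
      congr 1
      ring
    have hesum : ∑ j ∈ range N,
          (((k : ℤ) - 1) * e (j + 1) + d (j + 1)) • ((a * b) ^ (j + 1) * a)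
        = ∑ j ∈ range N, e (j + 1) • ((a * b) ^ (j + 1) * a)
          + (∑ j ∈ range N, d (j + 1) • ((a * b) ^ (j + 1) * a)
            + ∑ j ∈ range N, (e (j + 1) * ((k : ℤ) - 2)) • ((a * b) ^ (j + 1) * a)) := by
      rw [← Finset.sum_add_distrib, ← Finset.sum_add_distrib]
      refine Finset.sum_congr rfl fun j _ => ?_
      rw [← add_smul, ← add_smul]
      congr 1
      ring
    have hfsum : ∑ j ∈ range (N + 1), (f j + ((k : ℤ) - 1) * c (j + 1)) • ((b * a) ^ j * b)
        = ∑ j ∈ range (N + 1), f j • ((b * a) ^ j * b)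
          + ∑ j ∈ range (N + 1), (c (j + 1) * ((k : ℤ) - 1)) • ((b * a) ^ j * b) := by
      rw [← Finset.sum_add_distrib]
      refine Finset.sum_congr rfl fun j _ => ?_
      rw [← add_smul]
      congr 1
      ring
    rw [hm'1, he'0, hcsum, hdsum, hesum, hfsum]
    abel
  -- combine
  have hkey : expansion a b (N + 1) ((k : ℤ) * m) (fun j => k * c j) (fun j => k * d j)
      (fun j => k * e j) (fun j => k * f j)
      = expansion a b (N + 1) (m + ((k : ℤ) - 1) * e 0)
          (fun j => ((k : ℤ) - 1) * c j + f (j - 1))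
          (fun j => d j + ((k : ℤ) - 1) * e j)
          (fun j => if j = 0 then m + ((k : ℤ) - 1) * e 0 else ((k : ℤ) - 1) * e j + d j)
          (fun j => f j + ((k : ℤ) - 1) * c (j + 1)) := by
    rw [← hstepB, ← hexp, ← hstepA, hexp, hstepC]
  obtain ⟨hm, hc, hd, he, hf⟩ := huniq _ _ _ _ _ _ _ _ _ _ hkey
  have hkne : ((k : ℤ) - 1) ≠ 0 := by omega
  refine ⟨?_, ?_, ?_⟩
  · -- m = e 0
    have h0 : ((k : ℤ) - 1) * m = ((k : ℤ) - 1) * e 0 := by linear_combination hm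
    exact mul_left_cancel₀ hkne h0
  · intro j hj1 hjn
    have h := hc j (Finset.mem_Icc.mpr ⟨hj1, hjn⟩)
    linear_combination h
  · intro j hj1 hjn
    have h := he j (Finset.mem_range.mpr (by omega))
    simp only [if_neg (by omega : ¬ j = 0)] at h
    linear_combination h
end

section
/- Let k ≥ 2 be an integer and suppose real sequences (c_{n,j})_{1≤j≤n, n≥1} satisfy the recurrences c_{n+1,j} = 2(k−1)c_{n,j} + c_{n,j−1} + (k−1)²c_{n,j+1} for 2 ≤ j ≤ n+1, c_{n+1,1} = (2k−1)c_{n,1} + (k−1)²c_{n,2}, with c_{n,n} = 1 and the convention c_{n,j} = 0 for j > n, together with c_{n,1} − c_{n,2} = (k−1)^{n−1}/(n+1) · binom(2n,n). Define K_{n,0} := 2(k−1)(c_{n,1} + (k−2)Σ_{l=2}^n (k−1)^{l−2} c_{n,l}). Then K_{n,0} = (k−1)ⁿ · binom(2n,n) for all n ≥ 1. -/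
open Finset

private lemma auxrec (x : ℝ) (c : ℕ → ℕ → ℝ)
    (hzero : ∀ n j, n < j → c n j = 0)
    (hrec : ∀ n j, 1 ≤ n → 2 ≤ j → j ≤ n + 1 →
      c (n + 1) j = 2 * x * c n j + c n (j - 1) + x ^ 2 * c n (j + 1))
    (p : ℕ) :
    ∑ i ∈ range (p + 1), x ^ i * c (p + 2) (i + 2)
      = 4 * x * (∑ i ∈ range p, x ^ i * c (p + 1) (i + 2))
        + c (p + 1) 1 - x * c (p + 1) 2 := by
  have h1 : ∀ i ∈ range (p + 1), x ^ i * c (p + 2) (i + 2)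
      = 2 * x * (x ^ i * c (p + 1) (i + 2)) + x ^ i * c (p + 1) (i + 1)
        + x ^ 2 * (x ^ i * c (p + 1) (i + 3)) := by
    intro i hi
    have hi' := Finset.mem_range.mp hi
    rw [show (p + 2) = (p + 1) + 1 from rfl,
        hrec (p + 1) (i + 2) (by omega) (by omega) (by omega)]
    have e1 : i + 2 - 1 = i + 1 := rfl
    rw [e1]
    ring
  rw [Finset.sum_congr rfl h1, Finset.sum_add_distrib, Finset.sum_add_distrib,
      ← Finset.mul_sum, ← Finset.mul_sum]
  have hA1 : ∑ i ∈ range (p + 1), x ^ i * c (p + 1) (i + 2)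
      = ∑ i ∈ range p, x ^ i * c (p + 1) (i + 2) := by
    rw [Finset.sum_range_succ, hzero (p + 1) (p + 2) (by omega), mul_zero, add_zero]
  have hA2 : ∑ i ∈ range (p + 1), x ^ i * c (p + 1) (i + 1)
      = x * (∑ i ∈ range p, x ^ i * c (p + 1) (i + 2)) + c (p + 1) 1 := by
    rw [Finset.sum_range_succ', Finset.mul_sum]
    congr 1
    · apply Finset.sum_congr rfl; intro i _; ring
    · simp
  have hA3 : x ^ 2 * ∑ i ∈ range (p + 1), x ^ i * c (p + 1) (i + 3)
      = x * (∑ i ∈ range p, x ^ i * c (p + 1) (i + 2)) - x * c (p + 1) 2 := by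
    have e1 : ∑ i ∈ range (p + 2), x ^ (i + 1) * c (p + 1) (i + 2)
        = ∑ i ∈ range p, x ^ (i + 1) * c (p + 1) (i + 2) := by
      rw [Finset.sum_range_succ, Finset.sum_range_succ,
          hzero (p + 1) (p + 2) (by omega), hzero (p + 1) (p + 3) (by omega)]
      ring
    have e2 : ∑ i ∈ range (p + 2), x ^ (i + 1) * c (p + 1) (i + 2)
        = (∑ i ∈ range (p + 1), x ^ (i + 2) * c (p + 1) (i + 3)) + x * c (p + 1) 2 := by
      rw [Finset.sum_range_succ']
      norm_num
    have e3 : x ^ 2 * ∑ i ∈ range (p + 1), x ^ i * c (p + 1) (i + 3)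
        = ∑ i ∈ range (p + 1), x ^ (i + 2) * c (p + 1) (i + 3) := by
      rw [Finset.mul_sum]; apply Finset.sum_congr rfl; intro i _; ring
    have e4 : x * (∑ i ∈ range p, x ^ i * c (p + 1) (i + 2))
        = ∑ i ∈ range p, x ^ (i + 1) * c (p + 1) (i + 2) := by
      rw [Finset.mul_sum]; apply Finset.sum_congr rfl; intro i _; ring
    rw [e3, e4]
    linarith [e1, e2]
  rw [hA1, hA2, hA3]
  ring

theorem stmt1 (k : ℕ) (hk : 2 ≤ k) (c : ℕ → ℕ → ℝ)
    (hzero : ∀ n j, n < j → c n j = 0)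
    (hdiag : ∀ n, 1 ≤ n → c n n = 1)
    (hrec : ∀ n j, 1 ≤ n → 2 ≤ j → j ≤ n + 1 →
      c (n + 1) j = 2 * ((k : ℝ) - 1) * c n j + c n (j - 1) + ((k : ℝ) - 1) ^ 2 * c n (j + 1))
    (hrec1 : ∀ n, 1 ≤ n →
      c (n + 1) 1 = (2 * (k : ℝ) - 1) * c n 1 + ((k : ℝ) - 1) ^ 2 * c n 2)
    (hdiff : ∀ n, 1 ≤ n →
      c n 1 - c n 2 = ((k : ℝ) - 1) ^ (n - 1) / (n + 1) * (Nat.choose (2 * n) n)) :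
    ∀ n, 1 ≤ n →
      2 * ((k : ℝ) - 1) *
          (c n 1 + ((k : ℝ) - 2) * ∑ l ∈ Finset.Icc 2 n, ((k : ℝ) - 1) ^ (l - 2) * c n l)
        = ((k : ℝ) - 1) ^ n * (Nat.choose (2 * n) n) := by
  have hIcc : ∀ m : ℕ, 1 ≤ m → ∑ l ∈ Icc 2 m, ((k : ℝ) - 1) ^ (l - 2) * c m l
      = ∑ i ∈ range (m - 1), ((k : ℝ) - 1) ^ i * c m (i + 2) := by
    intro m hm
    rw [← Finset.Ico_add_one_right_eq_Icc, Finset.sum_Ico_eq_sum_range, show m + 1 - 2 = m - 1 from by omega]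
    apply Finset.sum_congr rfl
    intro i _
    have h1 : 2 + i - 2 = i := by omega
    have h2 : 2 + i = i + 2 := by omega
    rw [h1, h2]
  intro n hn
  induction n, hn using Nat.le_induction with
  | base =>
    have h0 : Finset.Icc 2 1 = (∅ : Finset ℕ) := Finset.Icc_eq_empty (by omega)
    rw [h0]
    simp [hdiag 1 le_rfl]
    norm_num
    ring
  | succ n hn ih =>
    obtain ⟨p, rfl⟩ : ∃ p, n = p + 1 := ⟨n - 1, by omega⟩
    have hn2 : p + 1 + 1 = p + 2 := rfl
    simp only [hn2] at *
    rw [hIcc (p + 1) (by omega), show p + 1 - 1 = p from rfl] at ih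
    rw [hIcc (p + 2) (by omega), show p + 2 - 1 = p + 1 from rfl,
      auxrec ((k : ℝ) - 1) c hzero hrec p,
      show c (p + 2) 1 = (2 * (k : ℝ) - 1) * c (p + 1) 1 + ((k : ℝ) - 1) ^ 2 * c (p + 1) 2 from
        hrec1 (p + 1) (by omega)]
    have hdiff' : ((p : ℝ) + 2) * (c (p + 1) 1 - c (p + 1) 2)
        = ((k : ℝ) - 1) ^ p * (Nat.choose (2 * (p + 1)) (p + 1)) := by
      rw [hdiff (p + 1) (by omega), show p + 1 - 1 = p from rfl]
      have : ((p : ℝ) + 1 + 1) ≠ 0 := by positivity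
      push_cast
      field_simp
      ring
    have hbin : ((p : ℝ) + 2) * (Nat.choose (2 * (p + 2)) (p + 2))
        = (4 * (p : ℝ) + 6) * (Nat.choose (2 * (p + 1)) (p + 1)) := by
      have h := Nat.succ_mul_centralBinom_succ (p + 1)
      simp only [Nat.centralBinom] at h
      have h2 : ((p + 1 + 1) * ((2 * (p + 1 + 1)).choose (p + 1 + 1)) : ℝ)
          = ((2 * (2 * (p + 1) + 1) * (2 * (p + 1)).choose (p + 1) : ℕ) : ℝ) := by
        exact_mod_cast congrArg (Nat.cast : ℕ → ℝ) h
      push_cast at h2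
      push_cast
      linarith [h2]
    have hp2 : ((p : ℝ) + 2) ≠ 0 := by positivity
    apply mul_left_cancel₀ hp2
    linear_combination (4 * ((k : ℝ) - 1) * ((p : ℝ) + 2)) * ih
      - 2 * ((k : ℝ) - 1) ^ 2 * hdiff' - ((k : ℝ) - 1) ^ (p + 2) * hbin
end

section
/- Let k ≥ 2 and let μ be the probability measure on [0, 4(k−1)/k²] with density x ↦ (1/(2π)) · √(4(k−1)x − k²x²) / (x(1−x)). Denote its n-th moment by m_n(∞) = ∫ xⁿ dμ. Then for every n ≥ 1, m_n(∞) − m_{n+1}(∞) = (k−1)^{n+1}/k^{2n+1} · C_n, where C_n = binom(2n,n)/(n+1) is the n-th Catalan number. -/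
open MeasureTheory

lemma realBeta {a b : ℝ} (ha : 0 < a) (hb : 0 < b) :
    ∫ x in (0:ℝ)..1, x ^ (a-1) * (1-x) ^ (b-1)
      = Real.Gamma a * Real.Gamma b / Real.Gamma (a+b) := by
  have key := Complex.Gamma_mul_Gamma_eq_betaIntegral (s := (a:ℂ)) (t := (b:ℂ))
    (by simpa using ha) (by simpa using hb)
  have hbeta : Complex.betaIntegral (a:ℂ) (b:ℂ)
      = ((∫ x in (0:ℝ)..1, x ^ (a-1) * (1-x) ^ (b-1) : ℝ) : ℂ) := by
    rw [Complex.betaIntegral, ← intervalIntegral.integral_ofReal]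
    apply intervalIntegral.integral_congr
    intro x hx
    rw [Set.uIcc_of_le (by norm_num : (0:ℝ) ≤ 1)] at hx
    beta_reduce
    rw [show ((a:ℂ)-1) = ((a-1:ℝ):ℂ) by push_cast; ring,
      show ((b:ℂ)-1) = ((b-1:ℝ):ℂ) by push_cast; ring,
      show ((1:ℂ) - (x:ℂ)) = ((1-x:ℝ):ℂ) by push_cast; ring,
      ← Complex.ofReal_cpow hx.1, ← Complex.ofReal_cpow (by linarith [hx.2])]
    push_cast
    ring
  have hG : Real.Gamma (a+b) ≠ 0 := (Real.Gamma_pos_of_pos (by linarith)).ne'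
  rw [hbeta, Complex.Gamma_ofReal, Complex.Gamma_ofReal, ← Complex.ofReal_add,
    Complex.Gamma_ofReal, ← Complex.ofReal_mul, ← Complex.ofReal_mul] at key
  have := Complex.ofReal_injective key
  field_simp at this ⊢
  linarith [this]

lemma Gamma_half (n : ℕ) :
    Real.Gamma ((n : ℝ) + 1/2) = (2*n).factorial * Real.sqrt Real.pi / (4^n * n.factorial) := by
  induction n with
  | zero =>
      rw [show ((0:ℕ):ℝ) + 1/2 = 1/2 by norm_num, Real.Gamma_one_half_eq]
      simp
  | succ n ih =>
      have h1 : ((n:ℝ)+1) + 1/2 = ((n:ℝ) + 1/2) + 1 := by ring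
      push_cast
      rw [h1, Real.Gamma_add_one (by positivity), ih]
      have h2 : (2*(n+1)).factorial = (2*n+2) * ((2*n+1) * (2*n).factorial) := by
        have : 2*(n+1) = (2*n+1) + 1 := by ring
        rw [this, Nat.factorial_succ, Nat.factorial_succ]
      have h3 : (n+1).factorial = (n+1) * n.factorial := Nat.factorial_succ n
      rw [h2, h3]
      have h4 : (0:ℝ) < 4^n * n.factorial := by positivity
      push_cast
      field_simp
      ring

lemma catalan_cast (n : ℕ) :
    (catalan n : ℝ) = (2*n).factorial / (n.factorial * (n+1).factorial) := by
  have h1 : (n+1) * catalan n = Nat.centralBinom n := succ_mul_catalan_eq_centralBinom n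
  have h2 : Nat.centralBinom n * n.factorial * n.factorial = (2*n).factorial := by
    rw [Nat.centralBinom]
    have := Nat.choose_mul_factorial_mul_factorial (by omega : n ≤ 2*n)
    simpa [Nat.two_mul, Nat.add_sub_cancel] using this
  have h3 : (n+1) * catalan n * n.factorial * n.factorial = (2*n).factorial := by
    rw [h1, h2]
  have h4 : ((n+1) * catalan n * n.factorial * n.factorial : ℝ) = ((2*n).factorial : ℝ) := by
    exact_mod_cast congrArg (Nat.cast : ℕ → ℝ) h3
  rw [Nat.factorial_succ]
  have hf : (0:ℝ) < n.factorial := by positivity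
  push_cast
  field_simp
  nlinarith [h4]

lemma betaVal (n : ℕ) :
    ∫ t in (0:ℝ)..1, t ^ ((n:ℝ) - 1/2) * (1-t) ^ ((1:ℝ)/2)
      = Real.pi * catalan n / (2 * 4^n) := by
  have h := realBeta (a := (n:ℝ) + 1/2) (b := (3:ℝ)/2) (by positivity) (by norm_num)
  rw [show ((n:ℝ) + 1/2) - 1 = (n:ℝ) - 1/2 by ring, show ((3:ℝ)/2) - 1 = (1:ℝ)/2 by ring] at h
  rw [h]
  have hG32 : Real.Gamma ((3:ℝ)/2) = Real.sqrt Real.pi / 2 := by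
    rw [show ((3:ℝ)/2) = 1/2 + 1 by ring, Real.Gamma_add_one (by norm_num),
      Real.Gamma_one_half_eq]
    ring
  have hGn2 : Real.Gamma ((n:ℝ) + 1/2 + 3/2) = (n+1).factorial := by
    rw [show ((n:ℝ) + 1/2 + 3/2) = ((n+1 : ℕ) : ℝ) + 1 by push_cast; ring,
      Real.Gamma_nat_eq_factorial]
  rw [hGn2, Gamma_half, hG32, catalan_cast]
  have hsq : Real.sqrt Real.pi * Real.sqrt Real.pi = Real.pi :=
    Real.mul_self_sqrt Real.pi_pos.le
  have h1 : (0:ℝ) < n.factorial := by positivity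
  have h2 : (0:ℝ) < (n+1).factorial := by positivity
  have h3 : (0:ℝ) < (2*n).factorial := by positivity
  have h4 : (0:ℝ) < (4:ℝ)^n := by positivity
  field_simp
  nlinarith [hsq, Real.pi_pos, mul_pos (mul_pos h1 h2) (mul_pos h3 h4)]

lemma integrable_aux (K : ℝ) (hK : 2 ≤ K) (m : ℕ) (hm : 1 ≤ m) :
    IntegrableOn (fun x : ℝ => x ^ m *
      (1/(2*Real.pi) * Real.sqrt (4*(K-1)*x - K^2*x^2) / (x*(1-x))))
      (Set.Icc (0:ℝ) (4*(K-1)/K^2)) volume := by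
  have hK0 : (0:ℝ) < K := by linarith
  set a : ℝ := 4*(K-1)/K^2 with ha_def
  have ha0 : 0 < a := by
    rw [ha_def]; apply div_pos (by linarith) (by positivity)
  have ha1 : a ≤ 1 := by
    rw [ha_def, div_le_one (by positivity)]; nlinarith [sq_nonneg (K-2)]
  have hsqrt : ∀ x : ℝ, 0 ≤ x →
      Real.sqrt (4*(K-1)*x - K^2*x^2) = K * (Real.sqrt x * Real.sqrt (a-x)) := by
    intro x hx
    have h : 4*(K-1)*x - K^2*x^2 = (K*K) * (x*(a-x)) := by
      rw [ha_def]; field_simp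
    rw [h, Real.sqrt_mul (by positivity : (0:ℝ) ≤ K*K), Real.sqrt_mul_self hK0.le,
      Real.sqrt_mul hx]
  have hbnd : IntegrableOn (fun x : ℝ => K/(2*Real.pi) * (1-x) ^ (-(1/2) : ℝ))
      (Set.Icc (0:ℝ) a) volume := by
    have h1 : IntervalIntegrable (fun x : ℝ => x ^ (-(1/2) : ℝ)) volume 0 1 :=
      intervalIntegral.intervalIntegrable_rpow' (by norm_num)
    have h2 := (h1.comp_sub_left 1).symm
    norm_num at h2
    rw [intervalIntegrable_iff_integrableOn_Ioc_of_le (by norm_num)] at h2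
    rw [integrableOn_Icc_iff_integrableOn_Ioc]
    exact ((h2.mono_set (Set.Ioc_subset_Ioc_right ha1)).const_mul _)
  apply MeasureTheory.Integrable.mono hbnd
  · apply Measurable.aestronglyMeasurable
    apply Measurable.mul
    · exact measurable_id.pow_const m
    · apply Measurable.div
      · exact measurable_const.mul
          (Real.continuous_sqrt.measurable.comp (by fun_prop))
      · exact measurable_id.mul (measurable_const.sub measurable_id)
  · rw [ae_restrict_iff' measurableSet_Icc]
    apply ae_of_all
    rintro x ⟨hx0, hxa⟩
    have hx1 : x ≤ 1 := hxa.trans ha1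
    rcases eq_or_lt_of_le hx0 with h0 | h0
    · simp [← h0, zero_pow (by omega : m ≠ 0)]
      positivity
    rcases eq_or_lt_of_le hx1 with h1 | h1
    · have hs : Real.sqrt (4*(K-1)*x - K^2*x^2) = 0 := by
        apply Real.sqrt_eq_zero_of_nonpos
        rw [h1]; nlinarith [sq_nonneg (K-2)]
      simp [hs, h1]
    · have h1x : 0 < 1 - x := by linarith
      rw [Real.norm_of_nonneg (by positivity :
          (0:ℝ) ≤ K/(2*Real.pi) * (1-x) ^ (-(1/2) : ℝ)),
        Real.norm_of_nonneg (mul_nonneg (pow_nonneg hx0 m)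
          (div_nonneg (by positivity) (mul_nonneg hx0 h1x.le)))]
      rw [hsqrt x hx0]
      obtain ⟨i, rfl⟩ : ∃ i, m = i + 1 := ⟨m-1, by omega⟩
      have e1 : x^(i+1) * (1/(2*Real.pi) * (K * (Real.sqrt x * Real.sqrt (a-x))) / (x*(1-x)))
          = K/(2*Real.pi) * (x^i * Real.sqrt x * (Real.sqrt (a-x)/(1-x))) := by
        field_simp
        ring
      rw [e1]
      have b1 : x^i ≤ 1 := pow_le_one₀ h0.le h1.le
      have b2 : Real.sqrt x ≤ 1 := by
        rw [show (1:ℝ) = Real.sqrt 1 by simp]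
        exact Real.sqrt_le_sqrt h1.le
      have b3 : Real.sqrt (a-x)/(1-x) ≤ (1-x) ^ (-(1/2) : ℝ) := by
        have hle : Real.sqrt (a-x) ≤ Real.sqrt (1-x) := Real.sqrt_le_sqrt (by linarith)
        have e2 : (1-x) ^ (-(1/2) : ℝ) = Real.sqrt (1-x)/(1-x) := by
          rw [eq_div_iff h1x.ne', Real.sqrt_eq_rpow, ← Real.rpow_add_one h1x.ne']
          norm_num
        rw [e2]
        gcongr
      have key : x^i * Real.sqrt x * (Real.sqrt (a-x)/(1-x)) ≤ 1 * 1 * ((1-x) ^ (-(1/2) : ℝ)) := by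
        apply mul_le_mul (mul_le_mul b1 b2 (Real.sqrt_nonneg x) (by norm_num)) b3
          (div_nonneg (Real.sqrt_nonneg _) h1x.le) (by norm_num)
      rw [one_mul, one_mul] at key
      exact mul_le_mul_of_nonneg_left key (by positivity)

lemma aux_val (K : ℝ) (hK : 2 ≤ K) (j : ℕ) :
    (∫ x in Set.Icc (0:ℝ) (4*(K-1)/K^2), x ^ (j+1) *
        (1/(2*Real.pi) * Real.sqrt (4*(K-1)*x - K^2*x^2) / (x*(1-x))))
      - (∫ x in Set.Icc (0:ℝ) (4*(K-1)/K^2), x ^ (j+2) *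
        (1/(2*Real.pi) * Real.sqrt (4*(K-1)*x - K^2*x^2) / (x*(1-x))))
      = (K-1)^(j+2)/K^(2*(j+1)+1) * catalan (j+1) := by
  have hK0 : (0:ℝ) < K := by linarith
  set a : ℝ := 4*(K-1)/K^2 with ha_def
  have ha0 : 0 < a := by
    rw [ha_def]; apply div_pos (by linarith) (by positivity)
  have ha1 : a ≤ 1 := by
    rw [ha_def, div_le_one (by positivity)]; nlinarith [sq_nonneg (K-2)]
  have hsqrt : ∀ x : ℝ, 0 ≤ x →
      Real.sqrt (4*(K-1)*x - K^2*x^2) = K * (Real.sqrt x * Real.sqrt (a-x)) := by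
    intro x hx
    have h : 4*(K-1)*x - K^2*x^2 = (K*K) * (x*(a-x)) := by
      rw [ha_def]; field_simp
    rw [h, Real.sqrt_mul (by positivity : (0:ℝ) ≤ K*K), Real.sqrt_mul_self hK0.le,
      Real.sqrt_mul hx]
  rw [← integral_sub (integrable_aux K hK (j+1) (by omega)) (integrable_aux K hK (j+2) (by omega))]
  rw [setIntegral_congr_fun measurableSet_Icc
    (g := fun x : ℝ => x ^ j * (1/(2*Real.pi) * Real.sqrt (4*(K-1)*x - K^2*x^2))) ?_]
  rotate_left
  · rintro x ⟨hx0, hxa⟩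
    have hx1 : x ≤ 1 := hxa.trans ha1
    rcases eq_or_lt_of_le hx0 with h0 | h0
    · simp [← h0]
    rcases eq_or_lt_of_le hx1 with h1 | h1
    · have hs : Real.sqrt (4*(K-1)*x - K^2*x^2) = 0 := by
        apply Real.sqrt_eq_zero_of_nonpos
        rw [h1]; nlinarith [sq_nonneg (K-2)]
      simp [hs, h1]
      apply Real.sqrt_eq_zero_of_nonpos
      nlinarith [sq_nonneg (K-2)]
    · have h1x : (0:ℝ) < 1 - x := by linarith
      field_simp
      ring
  rw [MeasureTheory.integral_Icc_eq_integral_Ioc, ← intervalIntegral.integral_of_le ha0.le]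
  rw [intervalIntegral.integral_congr
    (g := fun x : ℝ => K/(2*Real.pi) * (x ^ ((j:ℝ) + 1/2) * (a-x) ^ ((1:ℝ)/2))) ?_]
  rotate_left
  · intro x hx
    rw [Set.uIcc_of_le ha0.le] at hx
    obtain ⟨hx0, hxa⟩ := hx
    beta_reduce
    rcases eq_or_lt_of_le hx0 with h0 | h0
    · rw [← h0]
      rw [Real.zero_rpow (by positivity : ((j:ℝ) + 1/2) ≠ 0)]
      simp
    · rw [hsqrt x hx0, Real.sqrt_eq_rpow x, Real.sqrt_eq_rpow (a-x), Real.rpow_add h0,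
        show (x:ℝ)^j = x ^ ((j:ℝ)) from (Real.rpow_natCast x j).symm]
      ring
  have hscale := intervalIntegral.smul_integral_comp_mul_left
    (f := fun x : ℝ => K/(2*Real.pi) * (x ^ ((j:ℝ) + 1/2) * (a-x) ^ ((1:ℝ)/2)))
    (a := 0) (b := 1) (c := a)
  rw [mul_zero, mul_one] at hscale
  rw [← hscale]
  rw [intervalIntegral.integral_congr
    (g := fun t : ℝ => (K/(2*Real.pi) * a^(j+1)) *
      (t ^ (((j+1 : ℕ) : ℝ) - 1/2) * (1-t) ^ ((1:ℝ)/2))) ?_]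
  rotate_left
  · intro t ht
    rw [Set.uIcc_of_le (by norm_num : (0:ℝ) ≤ 1)] at ht
    obtain ⟨ht0, ht1⟩ := ht
    beta_reduce
    have e1 : a - a*t = a*(1-t) := by ring
    rw [e1, Real.mul_rpow ha0.le ht0, Real.mul_rpow ha0.le (by linarith)]
    have e2 : a ^ ((j:ℝ) + 1/2) * a ^ ((1:ℝ)/2) = a^(j+1) := by
      rw [← Real.rpow_add ha0, show ((j:ℝ) + 1/2 + 1/2) = ((j+1 : ℕ) : ℝ) by push_cast; ring,
        Real.rpow_natCast]
    have e3 : (((j+1 : ℕ) : ℝ) - 1/2) = (j:ℝ) + 1/2 := by push_cast; ring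
    rw [e3]
    calc K/(2*Real.pi) * ((a ^ ((j:ℝ)+1/2) * t ^ ((j:ℝ)+1/2)) * (a ^ ((1:ℝ)/2) * (1-t) ^ ((1:ℝ)/2)))
        = (K/(2*Real.pi) * (a ^ ((j:ℝ) + 1/2) * a ^ ((1:ℝ)/2))) *
          (t ^ ((j:ℝ)+1/2) * (1-t) ^ ((1:ℝ)/2)) := by ring
      _ = _ := by rw [e2]
  rw [intervalIntegral.integral_const_mul, betaVal (j+1)]
  rw [ha_def]
  have h4 : ((4:ℝ)*(K-1)/K^2)^(j+1) = 4^(j+1) * (K-1)^(j+1) / (K^2)^(j+1) := by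
    rw [div_pow, mul_pow]
  have h5 : K^(2*(j+1)+1) = (K^2)^(j+1) * K := by rw [pow_succ, pow_mul]
  rw [smul_eq_mul, h4, h5]
  have hpi := Real.pi_ne_zero
  field_simp
  ring

/-- The `n`-th moment of the stationary distribution of the free Jacobi process
associated with a projection of trace `1/k`. -/
noncomputable def momInf (k n : ℕ) : ℝ :=
  ∫ x in Set.Icc (0 : ℝ) (4 * ((k : ℝ) - 1) / (k : ℝ) ^ 2),
    x ^ n * ((1 / (2 * Real.pi)) * Real.sqrt (4 * ((k : ℝ) - 1) * x - (k : ℝ) ^ 2 * x ^ 2)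
      / (x * (1 - x)))

theorem stmt3 (k : ℕ) (hk : 2 ≤ k) (n : ℕ) (hn : 1 ≤ n) :
    momInf k n - momInf k (n + 1)
      = ((k : ℝ) - 1) ^ (n + 1) / (k : ℝ) ^ (2 * n + 1) * (catalan n) := by
  obtain ⟨j, rfl⟩ : ∃ j, n = j + 1 := ⟨n - 1, by omega⟩
  have hK : (2:ℝ) ≤ (k:ℝ) := by exact_mod_cast hk
  simpa only [momInf] using aux_val (k:ℝ) hK j
end

section
/- Let k ≥ 2 and let m_n(∞) be the n-th moment of the measure on [0, 4(k−1)/k²] with density (1/(2π))√(4(k−1)x − k²x²)/(x(1−x)). Then for all n ≥ 0, m_n(∞) = 1 − Σ_{j=0}^{n−1} (k−1)^{j+1}/k^{2j+1} · C_j, where C_j is the j-th Catalan number. -/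
open MeasureTheory

namespace FreeJacobiAux
open Real Finset intervalIntegral Set MeasureTheory


lemma S_even (n : ℕ) : ∫ θ in (0:ℝ)..(π/2), sin θ ^ (2*n) = π * Nat.centralBinom n / (2 * 4^n) := by
  induction n with
  | zero => simp [Nat.centralBinom]
  | succ m ih =>
    have h : 2 * (m+1) = 2*m + 2 := by ring
    rw [h, integral_sin_pow, ih]
    have hbR : ((m:ℝ)+1) * Nat.centralBinom (m+1) = 2 * (2*m+1) * Nat.centralBinom m := by
      exact_mod_cast Nat.succ_mul_centralBinom_succ m
    have hm1 : ((m:ℝ)+1) ≠ 0 := by positivity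
    simp [Real.sin_pi_div_two, Real.cos_pi_div_two]
    field_simp
    linear_combination (-2 * 4^m) * hbR

lemma V_cat (n : ℕ) : ∫ θ in (0:ℝ)..(π/2), sin θ ^ (2*n) * cos θ ^ 2
    = π * catalan n / 4^(n+1) := by
  have h1 : ∀ θ : ℝ, sin θ ^ (2*n) * cos θ ^ 2 = sin θ ^ (2*n) - sin θ ^ (2*(n+1)) := by
    intro θ
    have h0 := sin_sq_add_cos_sq θ
    have h2 : 2*(n+1) = 2*n + 2 := by ring
    rw [h2, pow_add]
    linear_combination (sin θ ^ (2*n)) * h0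
  rw [intervalIntegral.integral_congr (fun θ _ => h1 θ), intervalIntegral.integral_sub
    (Continuous.intervalIntegrable (by fun_prop) _ _) (Continuous.intervalIntegrable (by fun_prop) _ _),
    S_even, S_even]
  have hbR : ((n:ℝ)+1) * Nat.centralBinom (n+1) = 2 * (2*n+1) * Nat.centralBinom n := by
    exact_mod_cast Nat.succ_mul_centralBinom_succ n
  have hcR : ((n:ℝ)+1) * catalan n = Nat.centralBinom n := by
    exact_mod_cast succ_mul_catalan_eq_centralBinom n
  have hm1 : ((n:ℝ)+1) ≠ 0 := by positivity
  have key : ((n:ℝ)+1) * (π * Nat.centralBinom n / (2 * 4^n) - π * Nat.centralBinom (n+1) / (2 * 4^(n+1)))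
      = ((n:ℝ)+1) * (π * catalan n / 4^(n+1)) := by
    have h4 : ((4:ℝ))^(n+1) = 4*4^n := by ring
    rw [h4]
    have h0 : ((4:ℝ))^n ≠ 0 := by positivity
    have e : (((1+n).centralBinom : ℕ) : ℝ) = ((n+1).centralBinom : ℝ) := by rw [add_comm]
    field_simp
    apply mul_left_cancel₀ hm1
    linear_combination (-1:ℝ) * hbR - 2 * hcR
  exact mul_left_cancel₀ hm1 key

noncomputable def bb (k : ℕ) : ℝ := 4 * ((k : ℝ) - 1) / (k : ℝ) ^ 2

noncomputable def J (k n : ℕ) : ℝ :=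
  ∫ θ in Set.Ioo (0:ℝ) (π/2), sin θ ^ (2*n) * cos θ ^ 2 / (1 - bb k * sin θ ^ 2)

section facts
variable {k : ℕ}

lemma hk2 (hk : 2 ≤ k) : (2:ℝ) ≤ (k:ℝ) := by exact_mod_cast hk
lemma hkpos (hk : 2 ≤ k) : (0:ℝ) < (k:ℝ) := lt_of_lt_of_le (by norm_num) (hk2 hk)
lemma hb_pos (hk : 2 ≤ k) : 0 < bb k := by
  have := hk2 hk
  unfold bb
  have : (1:ℝ) ≤ (k:ℝ) - 1 := by linarith
  positivity
lemma hb_le (hk : 2 ≤ k) : bb k ≤ 1 := by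
  have h2 := hk2 hk
  have hkp := hkpos hk
  unfold bb
  rw [div_le_one (by positivity)]
  nlinarith [sq_nonneg ((k:ℝ) - 2)]
end facts

lemma image_eq (k : ℕ) (hk : 2 ≤ k) :
    (fun θ : ℝ => bb k * sin θ ^ 2) '' (Icc 0 (π/2)) = Icc 0 (bb k) := by
  have hb := hb_pos hk
  apply Set.Subset.antisymm
  · rintro x ⟨θ, hθ, rfl⟩
    constructor
    · positivity
    · show bb k * sin θ ^ 2 ≤ bb k
      nlinarith [sin_sq_le_one θ]
  · have hcont : ContinuousOn (fun θ : ℝ => bb k * sin θ ^ 2) (Icc 0 (π/2)) := by fun_prop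
    have := intermediate_value_Icc (by positivity : (0:ℝ) ≤ π/2) hcont
    simpa using this

lemma inj_on (k : ℕ) (hk : 2 ≤ k) :
    Set.InjOn (fun θ : ℝ => bb k * sin θ ^ 2) (Icc 0 (π/2)) := by
  have hb := hb_pos hk
  intro a ha b hb' h
  simp only at h
  have hsa : 0 ≤ sin a := sin_nonneg_of_nonneg_of_le_pi ha.1 (by linarith [ha.2, pi_pos])
  have hsb : 0 ≤ sin b := sin_nonneg_of_nonneg_of_le_pi hb'.1 (by linarith [hb'.2, pi_pos])
  have h2 : sin a ^ 2 = sin b ^ 2 := mul_left_cancel₀ (ne_of_gt hb) h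
  have : sin a = sin b := by nlinarith
  have hpi := pi_pos
  exact injOn_sin ⟨by linarith [ha.1], ha.2⟩ ⟨by linarith [hb'.1], hb'.2⟩ this

lemma momInf_eq (k : ℕ) (hk : 2 ≤ k) (n : ℕ) :
    momInf k n = ((k:ℝ)/π) * (bb k)^(n+1) * J k n := by
  have hb := hb_pos hk
  have hble := hb_le hk
  have hkp := hkpos hk
  have hpi := pi_pos
  have hderiv : ∀ θ ∈ Icc (0:ℝ) (π/2),
      HasDerivWithinAt (fun θ : ℝ => bb k * sin θ ^ 2)
        (bb k * (2 * sin θ * cos θ)) (Icc 0 (π/2)) θ := by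
    intro θ _
    have h1 : HasDerivAt (fun θ : ℝ => sin θ ^ 2) (2 * sin θ * cos θ) θ := by
      have := (Real.hasDerivAt_sin θ).pow 2
      exact this.congr_deriv (by norm_num)
    exact ((h1.const_mul (bb k))).hasDerivWithinAt
  have hchg := integral_image_eq_integral_abs_deriv_smul measurableSet_Icc hderiv
    (inj_on k hk)
    (fun x => x ^ n * ((1 / (2 * π)) * Real.sqrt (4 * ((k : ℝ) - 1) * x - (k : ℝ) ^ 2 * x ^ 2)
      / (x * (1 - x))))
  rw [image_eq k hk] at hchg
  have : momInf k n = ∫ x in Icc (0:ℝ) (bb k),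
      x ^ n * ((1 / (2 * π)) * Real.sqrt (4 * ((k : ℝ) - 1) * x - (k : ℝ) ^ 2 * x ^ 2)
      / (x * (1 - x))) := rfl
  rw [this, hchg, integral_Icc_eq_integral_Ioo]
  have key : ∀ θ ∈ Ioo (0:ℝ) (π/2),
      |bb k * (2 * sin θ * cos θ)| •
        ((bb k * sin θ ^ 2) ^ n * ((1 / (2 * π)) *
          Real.sqrt (4 * ((k : ℝ) - 1) * (bb k * sin θ ^ 2) - (k : ℝ) ^ 2 * (bb k * sin θ ^ 2) ^ 2)
          / ((bb k * sin θ ^ 2) * (1 - bb k * sin θ ^ 2))))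
      = ((k:ℝ)/π) * (bb k)^(n+1) * (sin θ ^ (2*n) * cos θ ^ 2 / (1 - bb k * sin θ ^ 2)) := by
    intro θ hθ
    have hs : 0 < sin θ := sin_pos_of_pos_of_lt_pi hθ.1 (by linarith [hθ.2, pi_pos])
    have hc : 0 < cos θ := cos_pos_of_mem_Ioo ⟨by linarith [hθ.1, pi_pos], hθ.2⟩
    have hpy := sin_sq_add_cos_sq θ
    have hdenom : 0 < 1 - bb k * sin θ ^ 2 := by nlinarith
    have hb4 : 4 * ((k:ℝ) - 1) = bb k * (k:ℝ)^2 := by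
      unfold bb; field_simp
    have hsq : 4 * ((k : ℝ) - 1) * (bb k * sin θ ^ 2) - (k : ℝ) ^ 2 * (bb k * sin θ ^ 2) ^ 2
        = ((k:ℝ) * bb k * sin θ * cos θ)^2 := by
      rw [hb4]; linear_combination (-((k:ℝ)^2 * (bb k)^2 * sin θ^2)) * hpy
    rw [hsq, Real.sqrt_sq (by positivity)]
    rw [smul_eq_mul, abs_of_pos (by positivity)]
    have h2n : sin θ ^ (2*n) = (sin θ ^ 2)^n := by rw [← pow_mul]
    rw [h2n]
    field_simp
    ring
  rw [setIntegral_congr_fun measurableSet_Ioo key]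
  rw [MeasureTheory.integral_const_mul]
  rfl

lemma J_integrable (k : ℕ) (hk : 2 ≤ k) (n : ℕ) :
    IntegrableOn (fun θ : ℝ => sin θ ^ (2*n) * cos θ ^ 2 / (1 - bb k * sin θ ^ 2))
      (Ioo (0:ℝ) (π/2)) := by
  have hb := hb_pos hk
  have hble := hb_le hk
  apply Integrable.mono' (g := fun _ : ℝ => 1 / bb k)
  · exact integrableOn_const measure_Ioo_lt_top.ne
  · exact ((Measurable.mul (by fun_prop) (by fun_prop)).div (by fun_prop)).aestronglyMeasurable
  · refine Filter.Eventually.of_forall (fun θ => ?_)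
    have hs1 : sin θ ^ 2 ≤ 1 := sin_sq_le_one θ
    have hs0 : (0:ℝ) ≤ sin θ ^ 2 := sq_nonneg _
    have hc0 : (0:ℝ) ≤ cos θ ^ 2 := sq_nonneg _
    have hc1 : cos θ ^ 2 ≤ 1 := cos_sq_le_one θ
    have hpy := sin_sq_add_cos_sq θ
    have hdenom : bb k * cos θ ^ 2 ≤ 1 - bb k * sin θ ^ 2 := by nlinarith
    have hd0 : 0 ≤ 1 - bb k * sin θ ^ 2 := le_trans (mul_nonneg hb.le hc0) hdenom
    have hnum0 : 0 ≤ sin θ ^ (2*n) * cos θ ^ 2 := mul_nonneg (by rw [pow_mul]; positivity) hc0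
    rw [Real.norm_eq_abs, abs_of_nonneg (div_nonneg hnum0 hd0)]
    rcases eq_or_lt_of_le hd0 with h | h
    · rw [← h, div_zero]; exact one_div_nonneg.2 hb.le
    · rw [div_le_div_iff₀ h hb]
      have h2n : sin θ ^ (2*n) ≤ 1 := by
        calc sin θ ^ (2*n) ≤ |sin θ ^ (2*n)| := le_abs_self _
          _ = |sin θ| ^ (2*n) := by rw [abs_pow]
          _ ≤ 1 := pow_le_one₀ (abs_nonneg _) (abs_sin_le_one θ)
      nlinarith

set_option maxHeartbeats 1000000 in
lemma J_step (k : ℕ) (hk : 2 ≤ k) (n : ℕ) :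
    J k n - bb k * J k (n+1) = π * catalan n / 4^(n+1) := by
  have hb := hb_pos hk
  have hble := hb_le hk
  have h1 := J_integrable k hk n
  have h2 := J_integrable k hk (n+1)
  have hmul : bb k * J k (n+1) = ∫ θ in Set.Ioo (0:ℝ) (π/2),
      bb k * (sin θ ^ (2*(n+1)) * cos θ ^ 2 / (1 - bb k * sin θ ^ 2)) := by
    rw [MeasureTheory.integral_const_mul]; rfl
  rw [J, hmul, ← MeasureTheory.integral_sub h1 (h2.const_mul _)]
  have key : ∀ θ ∈ Set.Ioo (0:ℝ) (π/2),
      sin θ ^ (2*n) * cos θ ^ 2 / (1 - bb k * sin θ ^ 2)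
        - bb k * (sin θ ^ (2*(n+1)) * cos θ ^ 2 / (1 - bb k * sin θ ^ 2))
      = sin θ ^ (2*n) * cos θ ^ 2 := by
    intro θ hθ
    have hc : 0 < cos θ := cos_pos_of_mem_Ioo ⟨by linarith [hθ.1, pi_pos], hθ.2⟩
    have hs1 : sin θ ^ 2 ≤ 1 := sin_sq_le_one θ
    have hpy := sin_sq_add_cos_sq θ
    have hdenom : 0 < 1 - bb k * sin θ ^ 2 := by nlinarith
    have h2e : 2*(n+1) = 2*n + 2 := by ring
    rw [h2e, pow_add]
    field_simp
  rw [setIntegral_congr_fun measurableSet_Ioo key,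
    ← MeasureTheory.integral_Ioc_eq_integral_Ioo,
    ← intervalIntegral.integral_of_le (by positivity : (0:ℝ) ≤ π/2)]
  exact V_cat n

set_option maxHeartbeats 1000000 in
lemma J_base (k : ℕ) (hk : 2 ≤ k) : J k 0 = π * k / (4 * ((k:ℝ) - 1)) := by
  have hb := hb_pos hk
  have hkp := hkpos hk
  rcases eq_or_lt_of_le hk with hk2 | hk3
  · -- k = 2
    subst hk2
    have hbb : bb 2 = 1 := by norm_num [bb]
    have key : ∀ θ ∈ Set.Ioo (0:ℝ) (π/2),
        sin θ ^ (2*0) * cos θ ^ 2 / (1 - bb 2 * sin θ ^ 2) = 1 := by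
      intro θ hθ
      have hc : 0 < cos θ := cos_pos_of_mem_Ioo ⟨by linarith [hθ.1, pi_pos], hθ.2⟩
      have hpy := sin_sq_add_cos_sq θ
      rw [hbb]
      have : 1 - 1 * sin θ ^ 2 = cos θ ^ 2 := by linarith
      rw [this]
      field_simp
      simp
    rw [J, setIntegral_congr_fun measurableSet_Ioo key]
    simp [Real.volume_Ioo, ENNReal.toReal_ofReal (by positivity : (0:ℝ) ≤ π/2)]
    rw [max_eq_left (by positivity)]
    ring
  · -- 2 < k
    set r : ℝ := ((k:ℝ) - 2) / (k:ℝ) with hr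
    have hk3R : (3:ℝ) ≤ (k:ℝ) := by exact_mod_cast hk3
    have hr0 : 0 < r := by apply div_pos <;> linarith
    have hr1 : r < 1 := by rw [div_lt_one hkp]; linarith
    have hbr : bb k = 1 - r^2 := by
      rw [bb, hr]; field_simp; ring
    set g : ℝ → ℝ := fun θ => (1-r) * (sin θ * cos θ) / (cos θ^2 + r * sin θ^2) with hg
    set F : ℝ → ℝ := fun θ => ((1-r)*θ + r * arctan (g θ)) / bb k with hF
    have hder : ∀ θ ∈ Set.uIcc (0:ℝ) (π/2),
        HasDerivAt F (cos θ^2 / (1 - bb k * sin θ^2)) θ := by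
      intro θ _
      have hpy := sin_sq_add_cos_sq θ
      have hc2 : cos θ^2 = 1 - sin θ^2 := by linarith
      have hs1 : sin θ ^ 2 ≤ 1 := sin_sq_le_one θ
      have hs0 : (0:ℝ) ≤ sin θ ^ 2 := sq_nonneg _
      have hv0' : (0:ℝ) < cos θ^2 + r * sin θ^2 := by nlinarith
      have hv0 : cos θ^2 + r * sin θ^2 ≠ 0 := ne_of_gt hv0'
      have hD0' : (0:ℝ) < 1 - (1-r^2) * sin θ^2 := by nlinarith
      have hD0 : 1 - (1-r^2) * sin θ^2 ≠ 0 := ne_of_gt hD0'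
      have hu : HasDerivAt (fun θ : ℝ => (1-r) * (sin θ * cos θ))
          ((1-r) * (cos θ * cos θ + sin θ * (-sin θ))) θ :=
        ((Real.hasDerivAt_sin θ).mul (Real.hasDerivAt_cos θ)).const_mul _
      have hv : HasDerivAt (fun θ : ℝ => cos θ^2 + r * sin θ^2)
          (2 * cos θ * (-sin θ) + r * (2 * sin θ * cos θ)) θ := by
        have h1 := (Real.hasDerivAt_cos θ).pow 2
        have h2 := ((Real.hasDerivAt_sin θ).pow 2).const_mul r
        exact (h1.add h2).congr_deriv (by norm_num)
      have hgder : HasDerivAt g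
          (((1-r) * (cos θ * cos θ + sin θ * (-sin θ)) * (cos θ^2 + r * sin θ^2)
            - (1-r) * (sin θ * cos θ) * (2 * cos θ * (-sin θ) + r * (2 * sin θ * cos θ)))
            / (cos θ^2 + r * sin θ^2)^2) θ := hu.div hv hv0
      have harc : HasDerivAt (fun θ => arctan (g θ))
          ((1 / (1 + g θ^2)) * (((1-r) * (cos θ * cos θ + sin θ * (-sin θ)) * (cos θ^2 + r * sin θ^2)
            - (1-r) * (sin θ * cos θ) * (2 * cos θ * (-sin θ) + r * (2 * sin θ * cos θ)))
            / (cos θ^2 + r * sin θ^2)^2)) θ := by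
        exact (Real.hasDerivAt_arctan (g θ)).comp θ hgder
      have hFder := ((hasDerivAt_id θ).const_mul (1-r)).add (harc.const_mul r) |>.div_const (bb k)
      refine hFder.congr_deriv (Eq.symm ?_)
      have hnum : (1-r) * (cos θ * cos θ + sin θ * (-sin θ)) * (cos θ^2 + r * sin θ^2)
            - (1-r) * (sin θ * cos θ) * (2 * cos θ * (-sin θ) + r * (2 * sin θ * cos θ))
          = (1-r)*(1-(1+r)*sin θ^2) := by
        rw [show (1-r) * (cos θ * cos θ + sin θ * (-sin θ)) * (cos θ^2 + r * sin θ^2)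
            - (1-r) * (sin θ * cos θ) * (2 * cos θ * (-sin θ) + r * (2 * sin θ * cos θ))
          = (1-r)*((cos θ^2 - sin θ^2)*(cos θ^2 + r*sin θ^2) + 2*(1-r)*(sin θ^2 * cos θ^2))
          from by ring, hc2]
        ring
      have h1g : 1 + g θ^2 = ((cos θ^2 + r*sin θ^2)^2 + ((1-r)*(sin θ*cos θ))^2)
          / (cos θ^2 + r*sin θ^2)^2 := by
        rw [hg]
        field_simp
      have hDen : (cos θ^2 + r*sin θ^2)^2 + ((1-r)*(sin θ*cos θ))^2
          = 1 - (1-r^2) * sin θ^2 := by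
        rw [show (cos θ^2 + r*sin θ^2)^2 + ((1-r)*(sin θ*cos θ))^2
          = (cos θ^2 + r*sin θ^2)^2 + (1-r)^2*(sin θ^2*cos θ^2) from by ring, hc2]
        ring
      have h2g : 1 / (1 + g θ^2) = (cos θ^2 + r*sin θ^2)^2 / (1 - (1-r^2) * sin θ^2) := by
        rw [h1g, hDen, one_div_div]
      rw [hnum, h2g]
      rw [show (cos θ^2 + r*sin θ^2)^2 / (1 - (1-r^2) * sin θ^2)
            * ((1-r)*(1-(1+r)*sin θ^2) / (cos θ^2 + r*sin θ^2)^2)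
          = (1-r)*(1-(1+r)*sin θ^2) / (1 - (1-r^2) * sin θ^2) from by
        field_simp]
      rw [hbr, hc2]
      have h1r : (1:ℝ) - r^2 ≠ 0 := by nlinarith
      have hD1 : 1 - sin θ ^ 2 * (1 - r ^ 2) ≠ 0 := by rw [mul_comm]; exact hD0
      field_simp
      ring
    have hcont : Continuous (fun θ : ℝ => cos θ^2 / (1 - bb k * sin θ^2)) := by
      apply Continuous.div (by fun_prop) (by fun_prop)
      intro θ
      have hs1 : sin θ ^ 2 ≤ 1 := sin_sq_le_one θ
      have : 0 < 1 - bb k * sin θ^2 := by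
        rw [hbr]; nlinarith [sq_nonneg (sin θ), hr0, hr1]
      exact ne_of_gt this
    have heval := intervalIntegral.integral_eq_sub_of_hasDerivAt hder
      (hcont.intervalIntegrable _ _)
    have hJ : J k 0 = ∫ θ in (0:ℝ)..(π/2), cos θ^2 / (1 - bb k * sin θ^2) := by
      rw [intervalIntegral.integral_of_le (by positivity : (0:ℝ) ≤ π/2),
        MeasureTheory.integral_Ioc_eq_integral_Ioo, J]
      apply setIntegral_congr_fun measurableSet_Ioo
      intro θ _
      norm_num
    rw [hJ, heval, hF]
    simp only [Real.sin_pi_div_two, Real.cos_pi_div_two, hg]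
    norm_num [Real.arctan_zero]
    rw [hbr]
    have h1r : (1:ℝ) - r^2 ≠ 0 := by nlinarith
    have hk1 : (k:ℝ) - 1 ≠ 0 := by linarith
    rw [hr]
    have h8 : (-((k:ℝ)*8) + (k:ℝ)^2*8) ≠ 0 := by nlinarith
    have hz : (-((k:ℝ)*8) + (k:ℝ)^2*8) * (-((k:ℝ)*8) + (k:ℝ)^2*8)⁻¹ = 1 :=
      mul_inv_cancel₀ h8
    field_simp
    rw [div_eq_iff (by nlinarith)]
    ring


lemma momInf_zero (k : ℕ) (hk : 2 ≤ k) : momInf k 0 = 1 := by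
  have hkp := hkpos hk
  have h2 := hk2 hk
  have hpi := pi_pos
  rw [momInf_eq k hk 0, J_base k hk]
  have hk1 : (0:ℝ) < (k:ℝ) - 1 := by linarith
  rw [bb]
  field_simp
  rw [zero_add, pow_one]
  field_simp

lemma momInf_diff (k : ℕ) (hk : 2 ≤ k) (n : ℕ) :
    momInf k n - momInf k (n+1)
      = ((k : ℝ) - 1) ^ (n + 1) / (k : ℝ) ^ (2 * n + 1) * (catalan n) := by
  have hkp := hkpos hk
  have h2 := hk2 hk
  have hpi := pi_pos
  have h := J_step k hk n
  rw [momInf_eq k hk n, momInf_eq k hk (n+1)]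
  have e1 : (k:ℝ)/π * bb k ^ (n+1) * J k n - (k:ℝ)/π * bb k ^ (n+1+1) * J k (n+1)
      = (k:ℝ)/π * bb k ^ (n+1) * (J k n - bb k * J k (n+1)) := by ring
  rw [e1, h, bb]
  have hk1 : (0:ℝ) < (k:ℝ) - 1 := by linarith
  rw [div_pow, mul_pow]
  field_simp
  ring

end FreeJacobiAux

theorem stmt4 (k : ℕ) (hk : 2 ≤ k) (n : ℕ) :
    momInf k n
      = 1 - ∑ j ∈ Finset.range n, ((k : ℝ) - 1) ^ (j + 1) / (k : ℝ) ^ (2 * j + 1) * (catalan j) := by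
  induction n with
  | zero => simpa using FreeJacobiAux.momInf_zero k hk
  | succ n ih =>
    have hd := FreeJacobiAux.momInf_diff k hk n
    rw [Finset.sum_range_succ]
    linarith
end

section
/- For every integer k ≥ 2 and |z| < 1, the moment generating function M_{∞,k}(z) := Σ_{n≥0} m_n(∞) zⁿ, where m_n(∞) = 1 − Σ_{j=0}^{n−1} (k−1)^{j+1} C_j / k^{2j+1} (C_j the Catalan numbers), equals (2 − k + √(k² − 4(k−1)z)) / (2(1−z)). -/
open Finset

lemma cb_le_four_pow (n : ℕ) : Nat.centralBinom n ≤ 4 ^ n := by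
  induction n with
  | zero => simp [Nat.centralBinom_zero]
  | succ n ih =>
    have h := Nat.succ_mul_centralBinom_succ n
    have h2 : (n + 1) * Nat.centralBinom (n + 1) ≤ (n+1) * (4 * Nat.centralBinom n) := by
      rw [h]; nlinarith [Nat.centralBinom_pos n]
    have := Nat.le_of_mul_le_mul_left h2 (Nat.succ_pos n)
    calc Nat.centralBinom (n+1) ≤ 4 * Nat.centralBinom n := this
    _ ≤ 4 * 4 ^ n := by omega
    _ = 4 ^ (n+1) := by ring

lemma catalan_le_four_pow (n : ℕ) : (catalan n : ℝ) ≤ 4 ^ n := by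
  have h1 : catalan n ≤ Nat.centralBinom n := by
    have := succ_mul_catalan_eq_centralBinom n
    calc catalan n ≤ (n+1) * catalan n := Nat.le_mul_of_pos_left _ n.succ_pos
      _ = _ := this
  have := cb_le_four_pow n
  exact_mod_cast le_trans h1 this

lemma cb_identity (n : ℕ) : 4 * Nat.centralBinom n = Nat.centralBinom (n+1) + 2 * catalan n := by
  have h := Nat.succ_mul_centralBinom_succ n
  have h2 := succ_mul_catalan_eq_centralBinom n
  have : (n+1) * (4 * Nat.centralBinom n) = (n+1) * (Nat.centralBinom (n+1) + 2 * catalan n) := by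
    nlinarith
  exact Nat.eq_of_mul_eq_mul_left (Nat.succ_pos n) this

/-- partial sums of `catalan j / 4^{j+1}` telescope. -/
lemma cat_partial (N : ℕ) :
    ∑ n ∈ range N, (catalan n : ℝ) * (1/4) ^ (n+1)
      = (1 - (Nat.centralBinom N : ℝ) * (1/4)^N) / 2 := by
  induction N with
  | zero => simp [Nat.centralBinom_zero]
  | succ N ih =>
    rw [Finset.sum_range_succ, ih]
    have h := cb_identity N
    have h' : 4 * (Nat.centralBinom N : ℝ) = (Nat.centralBinom (N+1) : ℝ) + 2 * (catalan N : ℝ) := by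
      exact_mod_cast h
    linear_combination (-((1:ℝ)/4)^N / 8) * h' 

lemma cat_partial_le (N : ℕ) :
    ∑ n ∈ range N, (catalan n : ℝ) * (1/4) ^ (n+1) ≤ 1/2 := by
  rw [cat_partial]
  have : (0:ℝ) ≤ (Nat.centralBinom N : ℝ) * (1/4)^N := by positivity
  linarith

lemma cat_quarter_summable : Summable (fun n => (catalan n : ℝ) * (1/4) ^ (n+1)) := by
  apply summable_of_sum_range_le (fun n => by positivity) (fun n => cat_partial_le n)

lemma cat_quarter_tsum_le : ∑' n, (catalan n : ℝ) * (1/4) ^ (n+1) ≤ 1/2 :=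
  Summable.tsum_le_of_sum_range_le cat_quarter_summable cat_partial_le

lemma cat_abs_summable {w : ℝ} (hw : |w| < 1/4) :
    Summable (fun n => |(catalan n : ℝ) * w ^ (n+1)|) := by
  refine Summable.of_nonneg_of_le (fun n => abs_nonneg _) (fun n => ?_) cat_quarter_summable
  rw [abs_mul, abs_pow, Nat.abs_cast]
  exact mul_le_mul_of_nonneg_left (pow_le_pow_left₀ (abs_nonneg w) hw.le _) (Nat.cast_nonneg _)

lemma cat_abs_tsum_lt {w : ℝ} (hw : |w| < 1/4) :
    ∑' n, |(catalan n : ℝ) * w ^ (n+1)| < 1/2 := by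
  have hlt : ∑' n, |(catalan n : ℝ) * w ^ (n+1)|
      < ∑' n, (catalan n : ℝ) * (1/4) ^ (n+1) := by
    apply Summable.tsum_lt_tsum_of_nonneg (i := 0) (fun n => abs_nonneg _) ?_ ?_ cat_quarter_summable
    · intro n
      rw [abs_mul, abs_pow, Nat.abs_cast]
      exact mul_le_mul_of_nonneg_left (pow_le_pow_left₀ (abs_nonneg w) hw.le _) (Nat.cast_nonneg _)
    · simpa [catalan_zero] using hw
  linarith [cat_quarter_tsum_le]

lemma catalan_succ_range (n : ℕ) :
    catalan (n + 1) = ∑ k ∈ range (n+1), catalan k * catalan (n - k) := by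
  rw [catalan_succ', ← Nat.sum_antidiagonal_eq_sum_range_succ (fun x y => catalan x * catalan y) n]

lemma catGF {w : ℝ} (hw : |w| < 1/4) :
    HasSum (fun j => (catalan j : ℝ) * w ^ (j+1)) ((1 - Real.sqrt (1 - 4*w)) / 2) := by
  set f : ℕ → ℝ := fun j => (catalan j : ℝ) * w ^ (j+1) with hf
  have habs : Summable (fun n => ‖f n‖) := by
    simpa only [hf, Real.norm_eq_abs] using cat_abs_summable hw
  have hsum : Summable f := habs.of_norm
  set S := ∑' n, f n with hS
  have hSabs : |S| < 1/2 := by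
    have h1 : ‖S‖ ≤ ∑' n, ‖f n‖ := norm_tsum_le_tsum_norm habs
    have h2 : ∑' n, ‖f n‖ < 1/2 := by
      simpa only [hf, Real.norm_eq_abs] using cat_abs_tsum_lt hw
    rw [Real.norm_eq_abs] at h1
    linarith
  have hC : HasSum (fun n => ∑ k ∈ range (n+1), f k * f (n-k)) (S*S) :=
    hasSum_sum_range_mul_of_summable_norm habs habs
  have hterm : ∀ n, ∑ k ∈ range (n+1), f k * f (n-k) = f (n+1) := by
    intro n
    have hc : ∀ k ∈ range (n+1), f k * f (n-k)
        = (catalan k : ℝ) * (catalan (n-k) : ℝ) * w^(n+2) := by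
      intro k hk
      rw [mem_range] at hk
      have hkn : (k + 1) + (n - k + 1) = n + 2 := by omega
      simp only [hf]
      rw [mul_mul_mul_comm, ← pow_add, hkn]
    rw [Finset.sum_congr rfl hc, ← Finset.sum_mul]
    simp only [hf]
    rw [catalan_succ_range n]
    push_cast
    ring
  have hC2 : HasSum (fun n => f (n+1)) (S*S) := by
    simpa only [hterm] using hC
  have hC3 : HasSum (fun n => f (n+1)) (S - ∑ i ∈ range 1, f i) := by
    refine (hasSum_nat_add_iff 1).mpr ?_
    simpa using hsum.hasSum
  have hf0 : ∑ i ∈ range 1, f i = w := by simp [hf]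
  have hq : S * S = S - w := by
    have := hC2.unique hC3
    rw [this, hf0]
  have h1 : (1 - 2*S)^2 = 1 - 4*w := by linear_combination 4*hq
  have hS2 : (0:ℝ) ≤ 1 - 2*S := by
    have := abs_lt.mp hSabs
    linarith [this.2]
  have hsq : Real.sqrt (1 - 4*w) = 1 - 2*S := by
    rw [← h1, Real.sqrt_sq hS2]
  have hval : (1 - Real.sqrt (1 - 4*w))/2 = S := by rw [hsq]; ring
  rw [hval]
  exact hsum.hasSum

/-- `m_n(∞) = 1 - Σ_{j<n} (k-1)^(j+1) C_j / k^(2j+1)`. -/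
noncomputable def momInfFormula (k n : ℕ) : ℝ :=
  1 - ∑ j ∈ Finset.range n, ((k : ℝ) - 1) ^ (j + 1) * (catalan j) / (k : ℝ) ^ (2 * j + 1)

theorem stmt9 (k : ℕ) (hk : 2 ≤ k) (z : ℝ) (hz : |z| < 1) :
    HasSum (fun n : ℕ => momInfFormula k n * z ^ n)
      ((2 - (k : ℝ) + Real.sqrt ((k : ℝ) ^ 2 - 4 * ((k : ℝ) - 1) * z)) / (2 * (1 - z))) := by
  have hkR : (2:ℝ) ≤ (k:ℝ) := by exact_mod_cast hk
  have hk0 : (0:ℝ) < (k:ℝ) := by linarith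
  have hk0' : (k:ℝ) ≠ 0 := ne_of_gt hk0
  set w : ℝ := ((k:ℝ)-1)*z/(k:ℝ)^2 with hwdef
  have hw : |w| < 1/4 := by
    rw [hwdef, abs_div, abs_mul]
    rw [abs_of_nonneg (show (0:ℝ) ≤ (k:ℝ)-1 by linarith),
      abs_of_nonneg (show (0:ℝ) ≤ (k:ℝ)^2 by positivity)]
    rw [div_lt_iff₀ (by positivity)]
    nlinarith [abs_nonneg z, sq_nonneg ((k:ℝ)-2)]
  have hcat := catGF hw
  have hD : (k:ℝ)^2 - 4*((k:ℝ)-1)*z = (k:ℝ)^2 * (1 - 4*w) := by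
    rw [hwdef]; field_simp
  have hsqrt : Real.sqrt ((k:ℝ)^2 - 4*((k:ℝ)-1)*z) = (k:ℝ) * Real.sqrt (1 - 4*w) := by
    rw [hD, Real.sqrt_mul (sq_nonneg _), Real.sqrt_sq hk0.le]
  have heq : (fun j => ((k:ℝ)-1)^(j+1) * (catalan j) / (k:ℝ)^(2*j+1) * z^(j+1))
      = fun j => (k:ℝ) * ((catalan j : ℝ) * w^(j+1)) := by
    funext j
    rw [hwdef, div_pow, mul_pow]
    field_simp
    ring
  have hT : HasSum (fun j => ((k:ℝ)-1)^(j+1) * (catalan j) / (k:ℝ)^(2*j+1) * z^(j+1))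
      ((k:ℝ) * ((1 - Real.sqrt (1-4*w))/2)) := by
    rw [heq]; exact hcat.mul_left _
  have hTabs : Summable
      (fun j => ‖((k:ℝ)-1)^(j+1) * (catalan j) / (k:ℝ)^(2*j+1) * z^(j+1)‖) := by
    have hsum : Summable (fun j => (k:ℝ) * |(catalan j : ℝ) * w^(j+1)|) :=
      (cat_abs_summable hw).mul_left _
    refine hsum.congr fun j => ?_
    rw [Real.norm_eq_abs, congrFun heq j]; simp [abs_mul, abs_of_pos hk0]
  have hg : HasSum (fun n : ℕ => z^n) (1-z)⁻¹ := hasSum_geometric_of_abs_lt_one hz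
  have hgabs : Summable (fun n : ℕ => ‖z^n‖) := by
    simpa only [Real.norm_eq_abs, abs_pow] using
      summable_geometric_of_lt_one (abs_nonneg z) hz
  have hC := hasSum_sum_range_mul_of_summable_norm hTabs hgabs
  rw [hT.tsum_eq, hg.tsum_eq] at hC
  have hterm : ∀ n : ℕ,
      ∑ j ∈ range (n+1), (((k:ℝ)-1)^(j+1) * (catalan j) / (k:ℝ)^(2*j+1) * z^(j+1)) * z^(n-j)
      = (∑ j ∈ range (n+1), ((k:ℝ)-1)^(j+1) * (catalan j) / (k:ℝ)^(2*j+1)) * z^(n+1) := by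
    intro n
    rw [Finset.sum_mul]
    refine Finset.sum_congr rfl (fun j hj => ?_)
    rw [mem_range] at hj
    rw [mul_assoc, ← pow_add]
    have h : j + 1 + (n - j) = n + 1 := by omega
    rw [h]
  simp only [hterm] at hC
  have hs : HasSum
      (fun n : ℕ => (∑ j ∈ range n, ((k:ℝ)-1)^(j+1) * (catalan j) / (k:ℝ)^(2*j+1)) * z^n)
      ((k:ℝ) * ((1 - Real.sqrt (1-4*w))/2) * (1-z)⁻¹ +
        ∑ i ∈ range 1, (∑ j ∈ range i, ((k:ℝ)-1)^(j+1) * (catalan j) / (k:ℝ)^(2*j+1)) * z^i) :=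
    (hasSum_nat_add_iff 1).mp hC
  simp only [Finset.range_one, Finset.sum_singleton, Finset.range_zero, Finset.sum_empty,
    zero_mul, add_zero] at hs
  have final := hg.sub hs
  have hfun : (fun n : ℕ => momInfFormula k n * z ^ n)
      = fun n : ℕ => z^n -
        (∑ j ∈ range n, ((k:ℝ)-1)^(j+1) * (catalan j) / (k:ℝ)^(2*j+1)) * z^n := by
    funext n
    rw [momInfFormula]
    ring
  rw [hfun]
  have hz1 : (1:ℝ) - z ≠ 0 := by
    have := abs_lt.mp hz
    linarith [this.2]
  have hval : (1-z)⁻¹ - (k:ℝ) * ((1 - Real.sqrt (1-4*w))/2) * (1-z)⁻¹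
      = (2 - (k : ℝ) + Real.sqrt ((k : ℝ) ^ 2 - 4 * ((k : ℝ) - 1) * z)) / (2 * (1 - z)) := by
    rw [hsqrt]
    field_simp
    ring
  rw [← hval]
  exact final
end

section
/- Let (A, τ) be a tracial noncommutative probability space, k ≥ 2, and a, b ∈ A with a² = (k−2)a + (k−1), b² = (k−2)b + (k−1), and τ(a) = τ(b) = 0. Then for all j ≥ 1: τ((ab)^j) = τ((ba)^j) and τ((ab)^j a) = (k−2) Σ_{l=1}^{j} (k−1)^{j−l} τ((ab)^l) = τ((ba)^j b). -/
open Finset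

theorem stmt14 {A : Type*} [Ring A] [Algebra ℝ A] (τ : A →ₗ[ℝ] ℝ)
    (htrace : ∀ x y : A, τ (x * y) = τ (y * x)) (hone : τ 1 = 1)
    (k : ℕ) (hk : 2 ≤ k) (a b : A)
    (ha : a ^ 2 = ((k : ℝ) - 2) • a + ((k : ℝ) - 1) • (1 : A))
    (hb : b ^ 2 = ((k : ℝ) - 2) • b + ((k : ℝ) - 1) • (1 : A))
    (hτa : τ a = 0) (hτb : τ b = 0) :
    ∀ j, 1 ≤ j →
      (τ ((a * b) ^ j) = τ ((b * a) ^ j)) ∧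
      (τ ((a * b) ^ j * a)
        = ((k : ℝ) - 2) * ∑ l ∈ Finset.Icc 1 j, ((k : ℝ) - 1) ^ (j - l) * τ ((a * b) ^ l)) ∧
      (τ ((b * a) ^ j * b)
        = ((k : ℝ) - 2) * ∑ l ∈ Finset.Icc 1 j, ((k : ℝ) - 1) ^ (j - l) * τ ((a * b) ^ l)) := by
  set c : ℝ := (k : ℝ) - 2 with hc
  set d : ℝ := (k : ℝ) - 1 with hd
  -- swap identities
  have hswapb : ∀ n : ℕ, b * (a * b) ^ n = (b * a) ^ n * b := by
    intro n; induction n with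
    | zero => simp
    | succ n ih =>
      rw [pow_succ, ← mul_assoc, ih, pow_succ]
      simp [mul_assoc]
  have hswapa : ∀ n : ℕ, a * (b * a) ^ n = (a * b) ^ n * a := by
    intro n; induction n with
    | zero => simp
    | succ n ih =>
      rw [pow_succ, ← mul_assoc, ih, pow_succ]
      simp [mul_assoc]
  -- quadratic relation applied
  have hτa2 : ∀ x : A, τ (a * a * x) = c * τ (a * x) + d * τ x := by
    intro x
    have h1 : a * a * x = c • (a * x) + d • x := by
      have : a * a = a ^ 2 := (sq a).symm
      rw [this, ha, add_mul, smul_mul_assoc, smul_mul_assoc, one_mul]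
    rw [h1, map_add, map_smul, map_smul, smul_eq_mul, smul_eq_mul]
  have hτb2 : ∀ x : A, τ (b * b * x) = c * τ (b * x) + d * τ x := by
    intro x
    have h1 : b * b * x = c • (b * x) + d • x := by
      have : b * b = b ^ 2 := (sq b).symm
      rw [this, hb, add_mul, smul_mul_assoc, smul_mul_assoc, one_mul]
    rw [h1, map_add, map_smul, map_smul, smul_eq_mul, smul_eq_mul]
  -- trace equality for all n
  have htr : ∀ n : ℕ, τ ((a * b) ^ n) = τ ((b * a) ^ n) := by
    intro n
    cases n with
    | zero => simp
    | succ n =>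
      have h1 : (a * b) ^ (n + 1) = a * (b * (a * b) ^ n) := by
        rw [pow_succ']; simp [mul_assoc]
      rw [h1, htrace, hswapb, pow_succ]
      simp [mul_assoc]
  -- key recursion steps
  have hstep_a : ∀ n : ℕ, τ ((a * b) ^ (n + 1) * a)
      = c * τ ((a * b) ^ (n + 1)) + d * τ ((b * a) ^ n * b) := by
    intro n
    have h1 : a * (a * b) ^ (n + 1) = a * a * (b * (a * b) ^ n) := by
      rw [pow_succ']; simp [mul_assoc]
    have h2 : a * (b * (a * b) ^ n) = (a * b) ^ (n + 1) := by
      rw [pow_succ']; simp [mul_assoc]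
    rw [htrace, h1, hτa2, h2, hswapb]
  have hstep_b : ∀ n : ℕ, τ ((b * a) ^ (n + 1) * b)
      = c * τ ((b * a) ^ (n + 1)) + d * τ ((a * b) ^ n * a) := by
    intro n
    have h1 : b * (b * a) ^ (n + 1) = b * b * (a * (b * a) ^ n) := by
      rw [pow_succ']; simp [mul_assoc]
    have h2 : b * (a * (b * a) ^ n) = (b * a) ^ (n + 1) := by
      rw [pow_succ']; simp [mul_assoc]
    rw [htrace, h1, hτb2, h2, hswapa]
  intro j hj
  induction j, hj using Nat.le_induction with
  | base =>
    refine ⟨htr 1, ?_, ?_⟩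
    · have := hstep_a 0
      simp only [zero_add, pow_zero, one_mul] at this
      rw [this, hτb]
      simp
    · have := hstep_b 0
      simp only [zero_add, pow_zero, one_mul] at this
      rw [this, hτa, ← htr 1]
      simp
  | succ j hj ih =>
    obtain ⟨ih1, ih2, ih3⟩ := ih
    have hsum : c * ∑ l ∈ Finset.Icc 1 (j + 1), d ^ (j + 1 - l) * τ ((a * b) ^ l)
        = c * τ ((a * b) ^ (j + 1))
          + d * (c * ∑ l ∈ Finset.Icc 1 j, d ^ (j - l) * τ ((a * b) ^ l)) := by
      rw [Finset.sum_Icc_succ_top (by omega : 1 ≤ j + 1)]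
      have hself : (j + 1) - (j + 1) = 0 := by omega
      rw [hself, pow_zero, one_mul]
      have hkey : ∑ l ∈ Finset.Icc 1 j, d ^ (j + 1 - l) * τ ((a * b) ^ l)
          = d * ∑ l ∈ Finset.Icc 1 j, d ^ (j - l) * τ ((a * b) ^ l) := by
        rw [Finset.mul_sum]
        apply Finset.sum_congr rfl
        intro l hl
        rw [Finset.mem_Icc] at hl
        have : j + 1 - l = (j - l) + 1 := by omega
        rw [this, pow_succ]
        ring
      rw [hkey]
      ring
    refine ⟨htr (j + 1), ?_, ?_⟩
    · rw [hstep_a j, ih3, hsum]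
    · rw [hstep_b j, ih2, ← htr (j + 1), hsum]
end

section
/- For a self-adjoint projection P with τ(P) = α in a tracial *-probability space, the R-transform of P equals R(y) = (1/2)[1 + (√(y² + 1 − 2y(1−2α)) − 1)/y], i.e. writing β = 1 − 2α, the Taylor coefficients of f(y) = (√(y² + 1 − 2βy) − 1)/y around 0 are: constant coefficient −β, and coefficient of yⁿ (n ≥ 1) equal to (P_{n−1}(β) − P_{n+1}(β))/(2n+1), where P_n are the Legendre polynomials. -/
/-- The Legendre polynomials, via the three-term recurrence
`(n+2) P_{n+2}(x) = (2n+3) x P_{n+1}(x) - (n+1) P_n(x)`. -/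
noncomputable def legendre : ℕ → ℝ → ℝ
  | 0, _ => 1
  | 1, x => x
  | (n + 2), x =>
      ((2 * (n : ℝ) + 3) * x * legendre (n + 1) x - ((n : ℝ) + 1) * legendre n x) / ((n : ℝ) + 2)

lemma legendre_rec (x : ℝ) (n : ℕ) :
    ((n:ℝ)+2) * legendre (n+2) x = (2*(n:ℝ)+3) * x * legendre (n+1) x - ((n:ℝ)+1) * legendre n x := by
  rw [legendre]
  have : ((n:ℝ)+2) ≠ 0 := by positivity
  field_simp

lemma legendre_zero (x : ℝ) : legendre 0 x = 1 := rfl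
lemma legendre_one' (x : ℝ) : legendre 1 x = x := rfl

lemma legendre_at_one (n : ℕ) : legendre n 1 = 1 := by
  induction n using Nat.strong_induction_on with
  | _ n ih =>
    match n with
    | 0 => rfl
    | 1 => rfl
    | (m+2) =>
      have h := legendre_rec 1 m
      rw [ih (m+1) (by omega), ih m (by omega)] at h
      have h2 : ((m:ℝ)+2) ≠ 0 := by positivity
      have h3 : ((m:ℝ)+2) * legendre (m+2) 1 = ((m:ℝ)+2) * 1 := by linarith
      exact mul_left_cancel₀ h2 h3

lemma legendre_at_neg_one (n : ℕ) : legendre n (-1) = (-1)^n := by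
  induction n using Nat.strong_induction_on with
  | _ n ih =>
    match n with
    | 0 => simp [legendre]
    | 1 => simp [legendre]
    | (m+2) =>
      have h := legendre_rec (-1) m
      rw [ih (m+1) (by omega), ih m (by omega)] at h
      have h2 : ((m:ℝ)+2) ≠ 0 := by positivity
      have e : (2*(m:ℝ)+3) * (-1) * (-1)^(m+1) - ((m:ℝ)+1) * (-1)^m = ((m:ℝ)+2) * (-1)^(m+2) := by
        rw [pow_succ, pow_succ]; ring
      rw [e] at h
      exact mul_left_cancel₀ h2 h

lemma legendre_abs_le (x : ℝ) (hx : |x| ≤ 1) (n : ℕ) : |legendre n x| ≤ 1 := by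
  rcases lt_or_eq_of_le hx with hx1 | hx1
  · set Q : ℕ → ℝ := fun n => (legendre (n+1) x)^2 - 2*x*(legendre n x)*(legendre (n+1) x) + (legendre n x)^2 with hQ
    have step : ∀ m, Q (m+1) ≤ Q m := by
      intro m
      have hrec := legendre_rec x m
      have key : Q m - Q (m+1) = (legendre (m+2) x - legendre m x)^2 / (2*(m:ℝ)+3) := by
        simp only [hQ, show m + 1 + 1 = m + 2 from rfl]
        rw [eq_div_iff (by positivity : (2*(m:ℝ)+3) ≠ 0)]
        linear_combination (2*(legendre m x - legendre (m+2) x)) * hrec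
      have hpos : (0:ℝ) ≤ (legendre (m+2) x - legendre m x)^2 / (2*(m:ℝ)+3) := by positivity
      have h9 : 0 ≤ Q m - Q (m+1) := key ▸ hpos
      linarith
    have mono : ∀ m, Q m ≤ Q 0 := by
      intro m
      induction m with
      | zero => exact le_rfl
      | succ k ih => exact le_trans (step k) ih
    have hQ0 : Q 0 = 1 - x^2 := by norm_num [hQ, legendre_zero, legendre_one']; ring
    have hlow : (1 - x^2) * (legendre n x)^2 ≤ Q n := by
      simp only [hQ]
      nlinarith [sq_nonneg (legendre (n+1) x - x * legendre n x)]
    have hx2 : x^2 < 1 := by nlinarith [abs_nonneg x, sq_abs x]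
    have hc : (1 - x^2) * (legendre n x)^2 ≤ 1 - x^2 :=
      le_trans hlow (le_trans (mono n) (le_of_eq hQ0))
    have hsq : (legendre n x)^2 ≤ 1 := by nlinarith
    exact (sq_le_one_iff_abs_le_one _).1 hsq
  · rcases (abs_eq (by norm_num : (0:ℝ) ≤ 1)).1 hx1 with h1 | h1
    · rw [h1, legendre_at_one]; norm_num
    · rw [h1, legendre_at_neg_one, abs_pow]; norm_num

lemma legendre_summable {β : ℝ} (hβ : |β| ≤ 1) {z : ℝ} (hz : |z| < 1) :
    Summable (fun n : ℕ => legendre n β * z ^ n) := by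
  refine Summable.of_norm_bounded (g := fun n => |z|^n)
    ((hasSum_geometric_of_abs_lt_one (by rwa [abs_abs])).summable) (fun n => ?_)
  rw [Real.norm_eq_abs, abs_mul, abs_pow]
  exact mul_le_of_le_one_left (by positivity) (legendre_abs_le β hβ n)

lemma summable_nat_mul_pow {r : ℝ} (hr0 : 0 < r) (hr : r < 1) :
    Summable (fun n : ℕ => (n:ℝ) * r^(n-1)) := by
  have h1 : Summable (fun n : ℕ => (n:ℝ) * r^n) := by
    simpa using summable_pow_mul_geometric_of_norm_lt_one 1
      (by rwa [Real.norm_eq_abs, abs_of_pos hr0] : ‖r‖ < 1)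
  have he : (fun n : ℕ => (n:ℝ) * r^(n-1)) = fun n : ℕ => (1/r) * ((n:ℝ) * r^n) := by
    funext n
    match n with
    | 0 => simp
    | (k+1) =>
      simp only [Nat.add_sub_cancel, pow_succ]
      field_simp
  rw [he]
  exact h1.mul_left _

lemma legendre_deriv_summable {β : ℝ} (hβ : |β| ≤ 1) {z r : ℝ} (hr0 : 0 < r) (hr : r < 1)
    (hz : |z| ≤ r) :
    Summable (fun n : ℕ => legendre n β * ((n:ℝ) * z ^ (n-1))) := by
  refine Summable.of_norm_bounded (g := fun n => (n:ℝ) * r^(n-1)) (summable_nat_mul_pow hr0 hr) (fun n => ?_)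
  · rw [Real.norm_eq_abs, abs_mul, abs_mul, Nat.abs_cast, abs_pow]
    have h1 : |z|^(n-1) ≤ r^(n-1) := pow_le_pow_left₀ (abs_nonneg z) hz _
    have h2 := legendre_abs_le β hβ n
    calc |legendre n β| * ((n:ℝ) * |z|^(n-1)) ≤ 1 * ((n:ℝ) * r^(n-1)) := by
          apply mul_le_mul h2 _ (by positivity) zero_le_one
          exact mul_le_mul_of_nonneg_left h1 (Nat.cast_nonneg n)
      _ = (n:ℝ) * r^(n-1) := one_mul _

lemma legendre_G_hasDerivAt {β : ℝ} (hβ : |β| ≤ 1) {z : ℝ} (hz : |z| < 1) :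
    HasDerivAt (fun w => ∑' n : ℕ, legendre n β * w ^ n)
      (∑' n : ℕ, legendre n β * ((n:ℝ) * z ^ (n-1))) z := by
  set r : ℝ := (1 + |z|)/2 with hr
  have hr0 : 0 < r := by positivity
  have hr1 : r < 1 := by rw [hr]; linarith
  have hzr : |z| < r := by rw [hr]; linarith [abs_nonneg z]
  have hball : ∀ w ∈ Metric.ball (0:ℝ) r, |w| < 1 := by
    intro w hw
    rw [Metric.mem_ball, Real.dist_eq, sub_zero] at hw
    linarith
  refine hasDerivAt_tsum_of_isPreconnected
    (𝕜 := ℝ) (F := ℝ) (g := fun n w => legendre n β * w ^ n) (g' := fun (n : ℕ) (w : ℝ) => legendre n β * ((n:ℝ) * w ^ (n-1))) (u := fun n : ℕ => (n:ℝ) * r^(n-1)) (t := Metric.ball (0:ℝ) r) (y₀ := (0:ℝ))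
    ?_ Metric.isOpen_ball ((convex_ball (0:ℝ) r).isPreconnected)
    (fun n w _ => ?_) (fun n w hw => ?_) ?_ ?_ ?_
  · exact summable_nat_mul_pow hr0 hr1
  · exact (hasDerivAt_pow n w).const_mul (legendre n β)
  · rw [Real.norm_eq_abs, abs_mul, abs_mul, Nat.abs_cast, abs_pow]
    have hw' : |w| ≤ r := by
      rw [Metric.mem_ball, Real.dist_eq, sub_zero] at hw
      exact le_of_lt hw
    have h1 : |w|^(n-1) ≤ r^(n-1) := pow_le_pow_left₀ (abs_nonneg w) hw' _
    have h2 := legendre_abs_le β hβ n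
    calc |legendre n β| * ((n:ℝ) * |w|^(n-1)) ≤ 1 * ((n:ℝ) * r^(n-1)) := by
          apply mul_le_mul h2 _ (by positivity) zero_le_one
          exact mul_le_mul_of_nonneg_left h1 (Nat.cast_nonneg n)
      _ = (n:ℝ) * r^(n-1) := one_mul _
  · exact Metric.mem_ball_self hr0
  · exact legendre_summable hβ (by simpa using hr0)
  · rwa [Metric.mem_ball, Real.dist_eq, sub_zero]

-- shifted derivative HasSum
lemma legendre_D_hasSum {β : ℝ} (hβ : |β| ≤ 1) {z : ℝ} (hz : |z| < 1) :
    HasSum (fun n : ℕ => ((n:ℝ)+1) * legendre (n+1) β * z ^ n)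
      (∑' n : ℕ, legendre n β * ((n:ℝ) * z ^ (n-1))) := by
  have hs : Summable (fun n : ℕ => legendre n β * ((n:ℝ) * z ^ (n-1))) :=
    legendre_deriv_summable hβ (r := (1+|z|)/2) (by positivity) (by linarith)
      (by linarith [abs_nonneg z])
  have h := hs.hasSum
  have h2 := (hasSum_nat_add_iff (f := fun n : ℕ => legendre n β * ((n:ℝ) * z ^ (n-1))) 1).mpr
    (by simpa using h)
  have he : (fun n : ℕ => legendre (n+1) β * (((n:ℕ)+1 : ℝ) * z ^ n))
      = fun n : ℕ => ((n:ℝ)+1) * legendre (n+1) β * z ^ n := by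
    funext n; push_cast; ring
  simpa [he] using h2

-- ODE identity
lemma legendre_ODE {β : ℝ} (hβ : |β| ≤ 1) {z : ℝ} (hz : |z| < 1) :
    (1 - 2*β*z + z^2) * (∑' n : ℕ, legendre n β * ((n:ℝ) * z ^ (n-1)))
      = (β - z) * (∑' n : ℕ, legendre n β * z ^ n) := by
  set G := ∑' n : ℕ, legendre n β * z ^ n with hG
  set D := ∑' n : ℕ, legendre n β * ((n:ℝ) * z ^ (n-1)) with hD
  have hGs : HasSum (fun n : ℕ => legendre n β * z ^ n) G := (legendre_summable hβ hz).hasSum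
  have hDs : HasSum (fun n : ℕ => ((n:ℝ)+1) * legendre (n+1) β * z ^ n) D :=
    legendre_D_hasSum hβ hz
  -- W sums to D - β G
  have hW : HasSum (fun n : ℕ => ((n:ℝ)+1) * legendre (n+1) β * z ^ n - β * (legendre n β * z ^ n))
      (D - β * G) := hDs.sub (hGs.mul_left β)
  -- B sums to (G - 2 β D) * z
  have hB : HasSum (fun n : ℕ => (legendre n β * z ^ n - 2*β*(((n:ℝ)+1) * legendre (n+1) β * z ^ n)) * z)
      ((G - 2*β*D) * z) := ((hGs.sub (hDs.mul_left (2*β))).mul_right z)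
  -- C sums to D * z^2
  have hC : HasSum (fun n : ℕ => (((n:ℝ)+1) * legendre (n+1) β * z ^ n) * z^2)
      (D * z^2) := hDs.mul_right (z^2)
  -- shift B by 1
  set B' : ℕ → ℝ := fun n => match n with
    | 0 => 0
    | (k+1) => (legendre k β * z ^ k - 2*β*(((k:ℝ)+1) * legendre (k+1) β * z ^ k)) * z with hB'
  have hB's : HasSum B' ((G - 2*β*D) * z) := by
    have := (hasSum_nat_add_iff (f := B') 1).mp (by exact hB)
    simpa [hB'] using this
  -- shift C by 2
  set C' : ℕ → ℝ := fun n => match n with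
    | 0 => 0
    | 1 => 0
    | (k+2) => (((k:ℝ)+1) * legendre (k+1) β * z ^ k) * z^2 with hC'
  have hC's : HasSum C' (D * z^2) := by
    have := (hasSum_nat_add_iff (f := C') 2).mp (by exact hC)
    simpa [hC', Finset.sum_range_succ] using this
  have htot : HasSum (fun n : ℕ => (((n:ℝ)+1) * legendre (n+1) β * z ^ n - β * (legendre n β * z ^ n))
      + B' n + C' n) (D - β * G + (G - 2*β*D) * z + D * z^2) := (hW.add hB's).add hC's
  have hzero : ∀ n : ℕ, (((n:ℝ)+1) * legendre (n+1) β * z ^ n - β * (legendre n β * z ^ n))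
      + B' n + C' n = 0 := by
    intro n
    match n with
    | 0 => simp [hB', hC', legendre_zero, legendre_one']
    | 1 =>
      simp only [hB', hC']
      have h := legendre_rec β 0
      push_cast at h ⊢
      linear_combination z * h
    | (k+2) =>
      simp only [hB', hC']
      have h := legendre_rec β (k+1)
      simp only [show k+1+2 = k+2+1 from rfl, show k+1+1 = k+2 from rfl] at h
      push_cast at h ⊢
      linear_combination (z^(k+2)) * h
  have h0 : HasSum (fun _ : ℕ => (0:ℝ)) (D - β * G + (G - 2*β*D) * z + D * z^2) :=
    funext hzero ▸ htot
  have hfin : D - β * G + (G - 2*β*D) * z + D * z^2 = 0 := h0.unique hasSum_zero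
  linear_combination hfin

lemma q_pos {β : ℝ} (hβ : |β| ≤ 1) {z : ℝ} (hz : |z| < 1) : 0 < 1 - 2*β*z + z^2 := by
  have h1 : β * z ≤ |z| := by
    calc β * z ≤ |β * z| := le_abs_self _
      _ = |β| * |z| := abs_mul β z
      _ ≤ 1 * |z| := mul_le_mul_of_nonneg_right hβ (abs_nonneg z)
      _ = |z| := one_mul _
  have h2 : |z|^2 = z^2 := sq_abs z
  nlinarith [abs_nonneg z]

lemma sqrt_q_hasDerivAt {β : ℝ} (hβ : |β| ≤ 1) {z : ℝ} (hz : |z| < 1) :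
    HasDerivAt (fun w => Real.sqrt (1 - 2*β*w + w^2))
      ((2*z - 2*β) / (2 * Real.sqrt (1 - 2*β*z + z^2))) z := by
  have hq : HasDerivAt (fun w : ℝ => 1 - 2*β*w + w^2) (2*z - 2*β) z := by
    have h1 : HasDerivAt (fun w : ℝ => w^2) (2*z) z := by
      simpa using hasDerivAt_pow 2 z
    have h2 : HasDerivAt (fun w : ℝ => 1 - 2*β*w) (-(2*β)) z := by
      simpa using ((hasDerivAt_id z).const_mul (2*β)).const_sub 1
    exact (h2.add h1).congr_deriv (by ring)
  have := hq.sqrt (ne_of_gt (q_pos hβ hz))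
  convert this using 1

lemma legendre_G_eq {β : ℝ} (hβ : |β| ≤ 1) {y : ℝ} (hy : |y| < 1) :
    (∑' n : ℕ, legendre n β * y ^ n) * Real.sqrt (1 - 2*β*y + y^2) = 1 := by
  set h : ℝ → ℝ := fun w => (∑' n : ℕ, legendre n β * w ^ n) * Real.sqrt (1 - 2*β*w + w^2)
    with hh
  have hder : ∀ z : ℝ, |z| < 1 → HasDerivAt h 0 z := by
    intro z hz
    set Dv := ∑' n : ℕ, legendre n β * ((n:ℝ) * z ^ (n-1)) with hDv
    set Gv := ∑' n : ℕ, legendre n β * z ^ n with hGv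
    have hs : (0:ℝ) < Real.sqrt (1 - 2*β*z + z^2) := Real.sqrt_pos.2 (q_pos hβ hz)
    have hsq : Real.sqrt (1 - 2*β*z + z^2) ^ 2 = 1 - 2*β*z + z^2 :=
      Real.sq_sqrt (le_of_lt (q_pos hβ hz))
    have hprod := (legendre_G_hasDerivAt hβ hz).mul (sqrt_q_hasDerivAt hβ hz)
    refine hprod.congr_deriv ?_; symm
    have hode := legendre_ODE hβ hz
    rw [← hDv, ← hGv] at hode
    rw [← hDv, ← hGv]
    field_simp
    linear_combination (-Dv) * hsq - hode
  have key : h y = h 0 := by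
    rcases le_or_gt 0 y with hy0 | hy0
    · have hsub : Set.Icc (0:ℝ) y ⊆ {z : ℝ | |z| < 1} := by
        intro w hw
        simp only [Set.mem_Icc] at hw
        rw [Set.mem_setOf_eq, abs_lt]
        constructor <;> [linarith; exact lt_of_le_of_lt hw.2 (lt_of_abs_lt hy)]
      exact constant_of_has_deriv_right_zero
        (fun w hw => ((hder w (hsub hw)).continuousAt).continuousWithinAt)
        (fun w hw => ((hder w (hsub (Set.Ico_subset_Icc_self hw))).hasDerivWithinAt))
        y (Set.mem_Icc.2 ⟨hy0, le_rfl⟩)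
    · have hsub : Set.Icc y (0:ℝ) ⊆ {z : ℝ | |z| < 1} := by
        intro w hw
        simp only [Set.mem_Icc] at hw
        rw [Set.mem_setOf_eq, abs_lt]
        have := neg_lt_of_abs_lt hy
        constructor <;> linarith
      exact (constant_of_has_deriv_right_zero
        (fun w hw => ((hder w (hsub hw)).continuousAt).continuousWithinAt)
        (fun w hw => ((hder w (hsub (Set.Ico_subset_Icc_self hw))).hasDerivWithinAt))
        0 (Set.mem_Icc.2 ⟨le_of_lt hy0, le_rfl⟩)).symm
  have hG0 : (∑' n : ℕ, legendre n β * (0:ℝ) ^ n) = 1 := by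
    rw [tsum_eq_single 0 (fun n hn => by
      rcases Nat.exists_eq_succ_of_ne_zero hn with ⟨k, rfl⟩
      simp)]
    simp [legendre_zero]
  have h0 : h 0 = 1 := by
    rw [hh]
    simp only
    rw [hG0]
    norm_num
  have : h y = 1 := key.trans h0
  simpa [hh] using this

theorem stmt17 (α : ℝ) (hα : α ∈ Set.Icc (0 : ℝ) 1) (β : ℝ) (hβ : β = 1 - 2 * α)
    (y : ℝ) (hy : |y| < 1) (hy0 : y ≠ 0) :
    HasSum
      (fun n : ℕ => (legendre n β - legendre (n + 2) β) / (2 * (n : ℝ) + 3) * y ^ (n + 1))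
      ((Real.sqrt (y ^ 2 + 1 - 2 * β * y) - 1) / y + β) := by
  obtain ⟨hα0, hα1⟩ := hα
  have hβ1 : |β| ≤ 1 := by rw [abs_le]; constructor <;> [linarith; linarith]
  set s := Real.sqrt (1 - 2*β*y + y^2) with hs
  have hqpos := q_pos hβ1 hy
  have hspos : 0 < s := Real.sqrt_pos.2 hqpos
  have hsq : s^2 = 1 - 2*β*y + y^2 := Real.sq_sqrt (le_of_lt hqpos)
  set G := ∑' n : ℕ, legendre n β * y ^ n with hG
  have hGs : HasSum (fun n : ℕ => legendre n β * y ^ n) G := (legendre_summable hβ1 hy).hasSum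
  have hGval : G * s = 1 := legendre_G_eq hβ1 hy
  -- E1
  have E1 : HasSum (fun n : ℕ => legendre n β * y ^ n * y) (G * y) := hGs.mul_right y
  -- E3 : shift by 1
  have E3 : HasSum (fun n : ℕ => legendre (n+1) β * y ^ (n+1)) (G - 1) := by
    refine (hasSum_nat_add_iff (f := fun n : ℕ => legendre n β * y ^ n) 1).mpr ?_
    simpa [legendre_zero] using hGs
  -- E2 : shift by 2
  have E2 : HasSum (fun n : ℕ => legendre (n+2) β * y ^ (n+2)) (G - (1 + β * y)) := by
    refine (hasSum_nat_add_iff (f := fun n : ℕ => legendre n β * y ^ n) 2).mpr ?_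
    have : ∑ i ∈ Finset.range 2, legendre i β * y ^ i = 1 + β * y := by
      simp [Finset.sum_range_succ, legendre_zero, legendre_one']
    rw [this]
    simpa using hGs
  have E2' : HasSum (fun n : ℕ => legendre (n+2) β * y ^ (n+2) * y⁻¹) ((G - (1 + β * y)) * y⁻¹) :=
    E2.mul_right y⁻¹
  have comb : HasSum (fun n : ℕ => legendre n β * y ^ n * y + legendre (n+2) β * y ^ (n+2) * y⁻¹
      - 2*β*(legendre (n+1) β * y ^ (n+1)))
      (G * y + (G - (1 + β * y)) * y⁻¹ - 2*β*(G - 1)) := (E1.add E2').sub (E3.mul_left (2*β))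
  have hfun : (fun n : ℕ => (legendre n β - legendre (n + 2) β) / (2 * (n : ℝ) + 3) * y ^ (n + 1))
      = fun n : ℕ => legendre n β * y ^ n * y + legendre (n+2) β * y ^ (n+2) * y⁻¹
      - 2*β*(legendre (n+1) β * y ^ (n+1)) := by
    funext n
    have hrec := legendre_rec β n
    have h3 : (2*(n:ℝ)+3) ≠ 0 := by positivity
    have coeff : (legendre n β - legendre (n + 2) β) / (2 * (n:ℝ) + 3)
        = legendre n β + legendre (n+2) β - 2*β*legendre (n+1) β := by
      rw [div_eq_iff h3]
      linear_combination (-2) * hrec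
    rw [coeff, pow_succ y (n+1), pow_succ y n]
    field_simp
  have hval : (Real.sqrt (y ^ 2 + 1 - 2 * β * y) - 1) / y + β
      = G * y + (G - (1 + β * y)) * y⁻¹ - 2*β*(G - 1) := by
    have hsy : Real.sqrt (y ^ 2 + 1 - 2 * β * y) = s := by
      rw [hs]; congr 1; ring
    rw [hsy]
    have hGe : G = 1 / s := by
      field_simp
      linarith [hGval]
    rw [hGe]
    field_simp
    linear_combination hsq
  rw [hfun, hval]
  exact comb
end

section
/- For every integer k ≥ 2, the pushforward of the measure μ̃_k(dx) = (1/(2π)) √(4(k−1)x − k²x²)/(x(1−x)) 1_{[0,4(k−1)/k²]}(x) dx under the dilation x ↦ kx has n-th moments converging, as k → ∞, to the moments of the Marchenko–Pastur law of parameter 1; concretely, lim_{k→∞} kⁿ m_n^{(k)}(∞) = 4ⁿ (1/2)_n / (n+1)! = C_n, where m_n^{(k)}(∞) is the n-th moment of μ̃_k and C_n the Catalan number. -/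
open MeasureTheory Filter

/-! ### Auxiliary material -/

/-- Rescaled integrand: `gJ n (1/k) u` is `kⁿ` times the original integrand at `x = u/k`,
divided by `k`. -/
noncomputable def gJ (n : ℕ) (t u : ℝ) : ℝ :=
  u ^ n * ((1 / (2 * Real.pi)) * Real.sqrt ((4 - 4 * t) * u - u ^ 2) / (u * (1 - u * t)))

lemma poch_fact (n : ℕ) : (4:ℝ)^n * (ascPochhammer ℝ n).eval (1/2 : ℝ) * (Nat.factorial n)
    = Nat.factorial (2*n) := by
  induction n with
  | zero => simp
  | succ n ih =>
    rw [ascPochhammer_succ_right]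
    have h2 : 2*(n+1) = (2*n+1)+1 := by ring
    rw [h2]
    simp only [Polynomial.eval_mul, Polynomial.eval_add, Polynomial.eval_X,
      Polynomial.eval_natCast, Nat.factorial_succ, pow_succ]
    push_cast
    linear_combination (4*((1/2:ℝ)+(n:ℝ))*((n:ℝ)+1)) * ih

lemma lemA (n : ℕ) : (4 : ℝ) ^ n * (ascPochhammer ℝ n).eval (1 / 2 : ℝ) / (Nat.factorial (n + 1))
      = (catalan n : ℝ) := by
  have h := poch_fact n
  have hc : (n+1) * catalan n = (2*n).choose n := succ_mul_catalan_eq_centralBinom n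
  have hch : (2*n).choose n * (Nat.factorial n * Nat.factorial n) = Nat.factorial (2*n) := by
    have h2 : n ≤ 2*n := by omega
    have := Nat.choose_mul_factorial_mul_factorial h2
    have h3 : 2*n - n = n := by omega
    rw [h3] at this
    rw [← this]; ring
  have hcast : ((2*n).choose n : ℝ) * ((Nat.factorial n : ℝ) * (Nat.factorial n : ℝ)) = (Nat.factorial (2*n) : ℝ) := by
    exact_mod_cast hch
  have hcast2 : ((n:ℝ)+1) * (catalan n : ℝ) = ((2*n).choose n : ℝ) := by exact_mod_cast hc
  have hf : (Nat.factorial (n+1) : ℝ) = ((n:ℝ)+1) * (Nat.factorial n : ℝ) := by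
    rw [Nat.factorial_succ]; push_cast; ring
  have hfn : (Nat.factorial n : ℝ) ≠ 0 := by positivity
  rw [div_eq_iff (by rw [hf]; positivity), hf]
  apply mul_right_cancel₀ hfn
  linear_combination h - hcast - ((Nat.factorial n : ℝ) * (Nat.factorial n : ℝ)) * hcast2

lemma gamma_poch (n : ℕ) : Real.Gamma ((n:ℝ) + 1/2)
    = (ascPochhammer ℝ n).eval (1/2 : ℝ) * Real.sqrt Real.pi := by
  induction n with
  | zero => simpa using Real.Gamma_one_half_eq
  | succ n ih =>
    have h : ((n:ℝ)+1) + 1/2 = ((n:ℝ) + 1/2) + 1 := by ring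
    push_cast
    rw [h, Real.Gamma_add_one (by positivity), ih, ascPochhammer_succ_right]
    simp [Polynomial.eval_mul]
    ring

lemma beta_real (n : ℕ) :
    ∫ u in (0:ℝ)..4, u ^ ((n:ℝ) - 1/2) * (4 - u) ^ ((1:ℝ)/2)
      = 4 ^ (n+1) * ((ascPochhammer ℝ n).eval (1/2 : ℝ) * Real.pi / 2) / (Nat.factorial (n+1)) := by
  set s : ℂ := (n:ℂ) + 1/2 with hs_def
  set t : ℂ := 3/2 with ht_def
  have hs : 0 < s.re := by simp [hs_def]; positivity
  have ht : 0 < t.re := by norm_num [ht_def]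
  have hst : s + t = ((n+1 : ℕ) : ℂ) + 1 := by push_cast [hs_def, ht_def]; ring
  have hΓst : Complex.Gamma (s+t) = ((Nat.factorial (n+1) : ℝ) : ℂ) := by
    rw [hst, Complex.Gamma_nat_eq_factorial]; norm_num
  have hbeta := Complex.Gamma_mul_Gamma_eq_betaIntegral hs ht
  have hscaled := Complex.betaIntegral_scaled s t (a := 4) (by norm_num)
  simp only [Complex.ofReal_ofNat] at hscaled
  have hre : (∫ x in (0:ℝ)..4, (x:ℂ) ^ (s - 1) * ((4:ℂ) - x) ^ (t - 1))
      = ((∫ u in (0:ℝ)..4, u ^ ((n:ℝ) - 1/2) * (4 - u) ^ ((1:ℝ)/2) : ℝ) : ℂ) := by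
    rw [← intervalIntegral.integral_ofReal]
    apply intervalIntegral.integral_congr
    intro x hx
    rw [Set.uIcc_of_le (by norm_num : (0:ℝ) ≤ 4)] at hx
    have hx0 : 0 ≤ x := hx.1
    have hx4 : 0 ≤ 4 - x := by linarith [hx.2]
    dsimp only
    have e1 : (((n:ℝ) - 1/2 : ℝ) : ℂ) = s - 1 := by push_cast [hs_def]; ring
    have e2 : (((1:ℝ)/2 : ℝ) : ℂ) = t - 1 := by push_cast [ht_def]; ring
    have e3 : ((4 - x : ℝ) : ℂ) = 4 - (x:ℂ) := by push_cast; ring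
    rw [Complex.ofReal_mul, Complex.ofReal_cpow hx0, Complex.ofReal_cpow hx4, e1, e2, e3]
  have hΓhalf : Real.Gamma ((3:ℝ)/2) = Real.sqrt Real.pi / 2 := by
    have h32 : (3:ℝ)/2 = 1/2 + 1 := by norm_num
    rw [h32, Real.Gamma_add_one (by norm_num), Real.Gamma_one_half_eq]
    ring
  have hΓs : Complex.Gamma s = ((Real.Gamma ((n:ℝ) + 1/2) : ℝ) : ℂ) := by
    rw [← Complex.Gamma_ofReal]; push_cast [hs_def]; norm_num
  have hΓt : Complex.Gamma t = ((Real.Gamma ((3:ℝ)/2) : ℝ) : ℂ) := by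
    rw [← Complex.Gamma_ofReal]; push_cast [ht_def]; norm_num
  have hpow : (4:ℂ) ^ (s + t - 1) = (((4:ℝ) ^ (n+1) : ℝ) : ℂ) := by
    have h1 : s + t - 1 = ((n+1 : ℕ) : ℂ) := by rw [hst]; ring
    rw [h1, Complex.cpow_natCast]; push_cast; ring
  have hfac_ne : ((Nat.factorial (n+1) : ℝ) : ℂ) ≠ 0 := by
    simp [Nat.factorial_ne_zero]
  have hbeta' : Complex.betaIntegral s t
      = Complex.Gamma s * Complex.Gamma t / ((Nat.factorial (n+1) : ℝ) : ℂ) := by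
    rw [hΓst] at hbeta
    rw [eq_div_iff hfac_ne]
    linear_combination -hbeta
  have key : ((∫ u in (0:ℝ)..4, u ^ ((n:ℝ) - 1/2) * (4 - u) ^ ((1:ℝ)/2) : ℝ) : ℂ)
      = ((4 ^ (n+1) * ((ascPochhammer ℝ n).eval (1/2 : ℝ) * Real.pi / 2) / (Nat.factorial (n+1)) : ℝ) : ℂ) := by
    rw [← hre, hscaled, hbeta', hΓs, hΓt, hpow, gamma_poch, hΓhalf]
    set P : ℝ := (ascPochhammer ℝ n).eval (1/2 : ℝ) with hP
    push_cast
    have hππ : (Real.sqrt Real.pi : ℂ) * (Real.sqrt Real.pi : ℂ) = (Real.pi : ℂ) := by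
      rw [← Complex.ofReal_mul, Real.mul_self_sqrt Real.pi_pos.le]
    field_simp
    linear_combination ((P:ℂ) * ((Nat.factorial (n+1) : ℂ))⁻¹) * hππ
  exact_mod_cast key

lemma gJ_meas (n : ℕ) (t : ℝ) : Measurable (gJ n t) := by
  unfold gJ
  fun_prop

lemma gJ_bound (n : ℕ) {k : ℕ} (hk : 8 ≤ k) {u : ℝ} (hu : u ∈ Set.Ioc (0:ℝ) 4) :
    ‖gJ n ((k:ℝ)⁻¹) u‖ ≤ (2 / Real.pi) * u ^ ((n:ℝ) - 1/2) := by
  obtain ⟨hu0, hu4⟩ := hu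
  set t : ℝ := (k:ℝ)⁻¹ with ht
  have hk8 : (8:ℝ) ≤ (k:ℝ) := by exact_mod_cast hk
  have ht0 : 0 ≤ t := by positivity
  have ht8 : t ≤ 1/8 := by
    rw [ht, inv_le_comm₀ (by linarith) (by norm_num)]
    simpa using hk8
  have hd : 1 - u * t ≥ 1/2 := by nlinarith
  have hD : u * (1 - u * t) ≥ u / 2 := by nlinarith
  have hDpos : 0 < u * (1 - u * t) := by nlinarith
  have hS : Real.sqrt ((4 - 4*t)*u - u^2) ≤ 2 * Real.sqrt u := by
    have h1 : (4 - 4*t)*u - u^2 ≤ 4 * u := by nlinarith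
    calc Real.sqrt ((4 - 4*t)*u - u^2) ≤ Real.sqrt (4*u) := Real.sqrt_le_sqrt h1
    _ = 2 * Real.sqrt u := by
        rw [show (4:ℝ)*u = 2^2 * u by ring, Real.sqrt_mul (by positivity), Real.sqrt_sq (by norm_num)]
  have hSpos : 0 ≤ Real.sqrt ((4 - 4*t)*u - u^2) := Real.sqrt_nonneg _
  have hπ : 0 < Real.pi := Real.pi_pos
  have hnn : 0 ≤ gJ n t u := by
    unfold gJ
    have : 0 ≤ (1 / (2 * Real.pi)) * Real.sqrt ((4 - 4*t)*u - u^2) / (u * (1 - u * t)) := by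
      apply div_nonneg (by positivity) hDpos.le
    positivity
  rw [Real.norm_eq_abs, abs_of_nonneg hnn]
  have hrp : u ^ ((n:ℝ) - 1/2) = u ^ n * Real.sqrt u / u := by
    rw [show ((n:ℝ) - 1/2) = (n:ℝ) + 1/2 - 1 by ring, Real.rpow_sub hu0, Real.rpow_add hu0,
      Real.rpow_one, Real.rpow_natCast, ← Real.sqrt_eq_rpow]
  have hstep : gJ n t u ≤ u ^ n * ((1 / (2 * Real.pi)) * (2 * Real.sqrt u) / (u / 2)) := by
    unfold gJ
    apply mul_le_mul_of_nonneg_left _ (by positivity)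
    apply div_le_div₀ (by positivity) _ (by positivity) hD
    apply mul_le_mul_of_nonneg_left hS (by positivity)
  calc gJ n t u ≤ u ^ n * ((1 / (2 * Real.pi)) * (2 * Real.sqrt u) / (u / 2)) := hstep
  _ = (2 / Real.pi) * u ^ ((n:ℝ) - 1/2) := by
      rw [hrp]; field_simp

lemma gJ_lim (n : ℕ) {u : ℝ} (hu : u ∈ Set.Ioc (0:ℝ) 4) :
    Tendsto (fun k : ℕ => gJ n ((k:ℝ)⁻¹) u) atTop (nhds (gJ n 0 u)) := by
  have h0 : Tendsto (fun k : ℕ => ((k:ℝ))⁻¹) atTop (nhds 0) :=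
    tendsto_inv_atTop_zero.comp tendsto_natCast_atTop_atTop
  have hc : ContinuousAt (fun t : ℝ => gJ n t u) 0 := by
    unfold gJ
    apply ContinuousAt.mul continuousAt_const
    apply ContinuousAt.div
    · exact continuousAt_const.mul ((Real.continuous_sqrt.continuousAt).comp (by fun_prop))
    · fun_prop
    · simpa using hu.1.ne'
  exact hc.tendsto.comp h0

lemma gJ_zero_integral (n : ℕ) :
    ∫ u in (0:ℝ)..4, gJ n 0 u
      = 4 ^ n * (ascPochhammer ℝ n).eval (1/2 : ℝ) / (Nat.factorial (n+1)) := by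
  have h1 : ∫ u in (0:ℝ)..4, gJ n 0 u
      = ∫ u in (0:ℝ)..4, (1/(2*Real.pi)) * (u ^ ((n:ℝ)-1/2) * (4-u) ^ ((1:ℝ)/2)) := by
    rw [intervalIntegral.integral_of_le (by norm_num : (0:ℝ) ≤ 4),
      intervalIntegral.integral_of_le (by norm_num : (0:ℝ) ≤ 4)]
    apply setIntegral_congr_fun measurableSet_Ioc
    intro u hu
    obtain ⟨hu0, hu4⟩ := hu
    unfold gJ
    have harg : (4 - 4*(0:ℝ))*u - u^2 = u * (4 - u) := by ring
    rw [harg, Real.sqrt_mul hu0.le, Real.sqrt_eq_rpow (4-u)]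
    dsimp only
    have hrp : u ^ ((n:ℝ) - 1/2) = u ^ n * Real.sqrt u / u := by
      rw [show ((n:ℝ) - 1/2) = (n:ℝ) + 1/2 - 1 by ring, Real.rpow_sub hu0, Real.rpow_add hu0,
        Real.rpow_one, Real.rpow_natCast, ← Real.sqrt_eq_rpow]
    rw [hrp]
    have hπ : Real.pi ≠ 0 := Real.pi_ne_zero
    field_simp
    ring
  rw [h1, intervalIntegral.integral_const_mul, beta_real n]
  have hπ : Real.pi ≠ 0 := Real.pi_ne_zero
  have hfac : (Nat.factorial (n+1) : ℝ) ≠ 0 := by positivity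
  field_simp
  ring

lemma gJ_intble (n : ℕ) {k : ℕ} (hk : 8 ≤ k) :
    IntervalIntegrable (gJ n ((k:ℝ)⁻¹)) volume 0 4 := by
  have hr : (-1:ℝ) < (n:ℝ) - 1/2 := by
    have : (0:ℝ) ≤ (n:ℝ) := Nat.cast_nonneg n
    linarith
  have hbd : IntervalIntegrable (fun u : ℝ => (2/Real.pi) * u ^ ((n:ℝ)-1/2)) volume 0 4 :=
    (intervalIntegral.intervalIntegrable_rpow' hr).const_mul _
  rw [intervalIntegrable_iff_integrableOn_Ioc_of_le (by norm_num : (0:ℝ) ≤ 4)] at hbd ⊢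
  apply hbd.mono' ((gJ_meas n _).aestronglyMeasurable)
  rw [ae_restrict_iff' measurableSet_Ioc]
  exact ae_of_all _ (fun u hu => gJ_bound n hk hu)

lemma key_eq (n : ℕ) {k : ℕ} (hk : 8 ≤ k) :
    (k:ℝ)^n * momInf k n = ∫ u in (0:ℝ)..4, gJ n ((k:ℝ)⁻¹) u := by
  have hk8 : (8:ℝ) ≤ (k:ℝ) := by exact_mod_cast hk
  set kr := (k:ℝ) with hkr_def
  have hkr : (0:ℝ) < kr := by linarith
  have hkrne : kr ≠ 0 := hkr.ne'
  set b := 4*(kr-1)/kr^2 with hb_def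
  have hb0 : 0 ≤ b := by
    apply div_nonneg (by nlinarith) (by positivity)
  have h1 : momInf k n = ∫ x in (0:ℝ)..b, x ^ n *
      ((1 / (2 * Real.pi)) * Real.sqrt (4 * (kr - 1) * x - kr ^ 2 * x ^ 2) / (x * (1 - x))) := by
    rw [momInf, MeasureTheory.integral_Icc_eq_integral_Ioc,
      ← intervalIntegral.integral_of_le hb0]
  have hpt : ∀ x : ℝ, kr^n * (x ^ n * ((1 / (2 * Real.pi)) *
      Real.sqrt (4 * (kr - 1) * x - kr ^ 2 * x ^ 2) / (x * (1 - x))))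
      = kr * gJ n kr⁻¹ (kr * x) := by
    intro x
    unfold gJ
    have harg : (4 - 4*kr⁻¹) * (kr*x) - (kr*x)^2 = 4*(kr-1)*x - kr^2*x^2 := by
      field_simp
    rw [harg]
    have hden : (kr*x) * (1 - (kr*x)*kr⁻¹) = kr * (x*(1-x)) := by field_simp
    rw [hden]
    have hπ : Real.pi ≠ 0 := Real.pi_ne_zero
    rcases eq_or_ne (x*(1-x)) 0 with hx | hx
    · rw [hx]; simp
    · field_simp
      ring
  have h2 : kr^n * momInf k n = ∫ x in (0:ℝ)..b, kr * gJ n kr⁻¹ (kr * x) := by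
    rw [h1, ← intervalIntegral.integral_const_mul]
    exact intervalIntegral.integral_congr (fun x _ => hpt x)
  have h4 := intervalIntegral.integral_comp_mul_left (a := (0:ℝ)) (b := b) (gJ n kr⁻¹) hkrne
  have hkb : kr * b = 4 - 4*kr⁻¹ := by rw [hb_def]; field_simp
  set m := 4 - 4*kr⁻¹ with hm_def
  have hminv : kr⁻¹ ≤ 1/8 := by
    rw [inv_le_comm₀ hkr (by norm_num)]
    linarith
  have hminv0 : (0:ℝ) ≤ kr⁻¹ := by positivity
  have hm0 : 0 ≤ m := by rw [hm_def]; linarith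
  have hm4 : m ≤ 4 := by rw [hm_def]; linarith
  have h5 : kr^n * momInf k n = ∫ u in (0:ℝ)..m, gJ n kr⁻¹ u := by
    rw [h2, intervalIntegral.integral_const_mul, h4, mul_zero, hkb, smul_eq_mul,
      ← mul_assoc, mul_inv_cancel₀ hkrne, one_mul]
  have hI1 : IntervalIntegrable (gJ n kr⁻¹) volume 0 m := by
    apply (gJ_intble n hk).mono_set
    rw [Set.uIcc_of_le hm0, Set.uIcc_of_le (by norm_num : (0:ℝ) ≤ 4)]
    exact Set.Icc_subset_Icc le_rfl hm4
  have hI2 : IntervalIntegrable (gJ n kr⁻¹) volume m 4 := by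
    apply (gJ_intble n hk).mono_set
    rw [Set.uIcc_of_le hm4, Set.uIcc_of_le (by norm_num : (0:ℝ) ≤ 4)]
    exact Set.Icc_subset_Icc hm0 le_rfl
  have hzero : ∫ u in m..4, gJ n kr⁻¹ u = 0 := by
    have heq : Set.EqOn (gJ n kr⁻¹) (fun _ => 0) (Set.uIcc m 4) := by
      intro u hu
      rw [Set.uIcc_of_le hm4] at hu
      have h0u : 0 ≤ u := le_trans hm0 hu.1
      have hmu : 4 - 4 * kr⁻¹ ≤ u := by rw [← hm_def]; exact hu.1
      have hle : (4 - 4*kr⁻¹)*u - u^2 ≤ 0 := by nlinarith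
      unfold gJ
      rw [Real.sqrt_eq_zero'.mpr hle]
      simp
    rw [intervalIntegral.integral_congr heq, intervalIntegral.integral_zero]
  have hsplit := intervalIntegral.integral_add_adjacent_intervals hI1 hI2
  rw [h5]
  linarith [hsplit, hzero]

theorem stmt19 (n : ℕ) :
    Tendsto (fun k : ℕ => (k : ℝ) ^ n * momInf k n) atTop
      (nhds ((4 : ℝ) ^ n * (ascPochhammer ℝ n).eval (1 / 2 : ℝ) / (Nat.factorial (n + 1)))) ∧
    (4 : ℝ) ^ n * (ascPochhammer ℝ n).eval (1 / 2 : ℝ) / (Nat.factorial (n + 1))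
      = (catalan n : ℝ) := by
  refine ⟨?_, lemA n⟩
  have hr : (-1:ℝ) < (n:ℝ) - 1/2 := by
    have : (0:ℝ) ≤ (n:ℝ) := Nat.cast_nonneg n
    linarith
  have hDCT : Tendsto (fun k : ℕ => ∫ u in (0:ℝ)..4, gJ n ((k:ℝ)⁻¹) u) atTop
      (nhds (∫ u in (0:ℝ)..4, gJ n 0 u)) := by
    apply intervalIntegral.tendsto_integral_filter_of_dominated_convergence
      (bound := fun u => (2/Real.pi) * u ^ ((n:ℝ)-1/2))
    · exact Eventually.of_forall (fun k => (gJ_meas n _).aestronglyMeasurable.restrict)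
    · rw [eventually_atTop]
      refine ⟨8, fun k hk => ae_of_all _ (fun u hu => ?_)⟩
      rw [Set.uIoc_of_le (by norm_num : (0:ℝ) ≤ 4)] at hu
      exact gJ_bound n hk hu
    · exact (intervalIntegral.intervalIntegrable_rpow' hr).const_mul _
    · refine ae_of_all _ (fun u hu => ?_)
      rw [Set.uIoc_of_le (by norm_num : (0:ℝ) ≤ 4)] at hu
      exact gJ_lim n hu
  rw [gJ_zero_integral n] at hDCT
  apply hDCT.congr'
  filter_upwards [eventually_ge_atTop 8] with k hk
  exact (key_eq n hk).symm
end
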